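/- arXiv:1801.09875 — 5 statements merged into one kernel-verified Lean document; each statement's English description precedes it below -/
import Mathlib

section
/- Suppose ρ > 1/2. Then there exists a real-valued random variable L such that n^{−ρ}·U_n → L almost surely as n → ∞; in particular, n^{−ρ}(X_n − Y_n) converges almost surely to a finite limit. -/
/-!
Given `𝓕ₙ`, the step `Uₙ₊₁ - Uₙ` is `±1` with conditional mean `ρ Uₙ / Sₙ`, and
`Sₙ = x₀ + y₀ + n`; hence `E[Uₙ₊₁ | 𝓕ₙ] = (1 + ρ / (x₀ + y₀ + n)) Uₙ`, and `Mₙ = Uₙ / cₙ` with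
`cₙ = ∏_{k<n} (1 + ρ / (x₀ + y₀ + k))` is a martingale whose increments are `O(1 / cₙ₊₁)`.
Euler's limit formula for `Γ` gives `n^{-ρ} cₙ → Γ(x₀ + y₀) / Γ(x₀ + y₀ + ρ) > 0`, so for `ρ > 1/2`
the increments are square summable. Martingale increments are orthogonal, so `M` is bounded in
`L²`, hence in `L¹`, and converges almost surely; then `n^{-ρ} Uₙ = (n^{-ρ} cₙ) Mₙ` converges too.
-/

open MeasureTheory Filter Finset Topology

/-- The paper's `∏_{k<n} aₖ(1)`, with `s` here standing for `x₀ + y₀` (the paper's `s` is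
`(α + β)(x₀ + y₀)`). -/
noncomputable def growthFactor (ρ s : ℝ) (n : ℕ) : ℝ := ∏ k ∈ range n, (1 + ρ / (s + k))

lemma growthFactor_succ (ρ s : ℝ) (n : ℕ) :
    growthFactor ρ s (n + 1) = growthFactor ρ s n * (1 + ρ / (s + n)) :=
  prod_range_succ _ _

lemma one_add_div_add_natCast_pos {ρ s : ℝ} (hs : 0 < s) (hρs : 0 < s + ρ) (k : ℕ) :
    0 < 1 + ρ / (s + k) := by
  rw [one_add_div (by positivity)]
  exact div_pos (by linarith [k.cast_nonneg (α := ℝ)]) (by positivity)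

lemma growthFactor_pos {ρ s : ℝ} (hs : 0 < s) (hρs : 0 < s + ρ) (n : ℕ) :
    0 < growthFactor ρ s n :=
  prod_pos fun k _ => one_add_div_add_natCast_pos hs hρs k

lemma GammaSeq_div_GammaSeq_add {ρ s : ℝ} (hs : 0 < s) {n : ℕ} (hn : n ≠ 0) :
    Real.GammaSeq s n / Real.GammaSeq (s + ρ) n = (n : ℝ) ^ (-ρ) * growthFactor ρ s (n + 1) := by
  have hn' : (0 : ℝ) < n := by positivity
  have hprod : growthFactor ρ s (n + 1) =
      (∏ j ∈ range (n + 1), (s + ρ + j)) / ∏ j ∈ range (n + 1), (s + j) := by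
    rw [growthFactor, ← prod_div_distrib]
    refine prod_congr rfl fun k _ => ?_
    rw [one_add_div (by positivity)]
    ring
  have hP : (∏ j ∈ range (n + 1), (s + j)) ≠ 0 := prod_ne_zero_iff.2 fun k _ => by positivity
  rw [hprod, Real.GammaSeq, Real.GammaSeq, Real.rpow_add hn', Real.rpow_neg hn'.le]
  have hfact : (n.factorial : ℝ) ≠ 0 := by positivity
  have hpow_s : (n : ℝ) ^ s ≠ 0 := by positivity
  have hpow_ρ : (n : ℝ) ^ ρ ≠ 0 := by positivity
  field_simp

theorem tendsto_rpow_neg_mul_growthFactor {ρ s : ℝ} (hs : 0 < s) (hρs : 0 < s + ρ) :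
    Tendsto (fun n : ℕ => (n : ℝ) ^ (-ρ) * growthFactor ρ s n) atTop
      (𝓝 (Real.Gamma s / Real.Gamma (s + ρ))) := by
  have hquot : Tendsto (fun n : ℕ => (n : ℝ) ^ (-ρ) * growthFactor ρ s (n + 1)) atTop
      (𝓝 (Real.Gamma s / Real.Gamma (s + ρ))) :=
    ((Real.GammaSeq_tendsto_Gamma s).div (Real.GammaSeq_tendsto_Gamma (s + ρ))
      (Real.Gamma_pos_of_pos hρs).ne').congr' <|
        (eventually_ne_atTop 0).mono fun n hn => GammaSeq_div_GammaSeq_add hs hn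
  have hfactor : Tendsto (fun n : ℕ => 1 + ρ / (s + n)) atTop (𝓝 1) := by
    simpa using tendsto_const_nhds.add
      (tendsto_const_nhds.div_atTop (tendsto_atTop_add_const_left _ s tendsto_natCast_atTop_atTop))
  simpa using (hquot.div hfactor one_ne_zero).congr fun n => by
    simp only [Pi.div_apply, growthFactor_succ, ← mul_assoc,
      mul_div_cancel_right₀ _ (one_add_div_add_natCast_pos hs hρs n).ne']

theorem summable_inv_growthFactor_sq {ρ s : ℝ} (hs : 0 < s) (hρ : 1 / 2 < ρ) :
    Summable fun n => (growthFactor ρ s n)⁻¹ ^ 2 := by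
  have hρs : 0 < s + ρ := by linarith
  have hbdd : (fun n : ℕ => ((n : ℝ) ^ (-ρ) * growthFactor ρ s n)⁻¹ ^ 2) =O[atTop]
      fun _ => (1 : ℝ) :=
    (((tendsto_rpow_neg_mul_growthFactor hs hρs).inv₀
      (div_pos (Real.Gamma_pos_of_pos hs) (Real.Gamma_pos_of_pos hρs)).ne').pow 2).isBigO_one ℝ
  have hO : (fun n => (growthFactor ρ s n)⁻¹ ^ 2) =O[atTop] fun n : ℕ => (n : ℝ) ^ (-ρ * 2) := by
    refine (hbdd.mul (Asymptotics.isBigO_refl (fun n : ℕ => (n : ℝ) ^ (-ρ * 2)) _)).congr'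
      ?_ (by simp)
    filter_upwards [eventually_ne_atTop 0] with n hn
    have hn' : (n : ℝ) ^ (-ρ) ≠ 0 := by positivity
    rw [Real.rpow_mul n.cast_nonneg, Real.rpow_two]
    field_simp
  exact summable_of_isBigO_nat (Real.summable_nat_rpow.2 (by linarith)) hO

theorem abs_inv_growthFactor_mul_sub_le {ρ s u u' : ℝ} (hs : 0 < s) (hρs : 0 < s + ρ) {n : ℕ}
    (hstep : |u' - u| ≤ 1) (hu : |u| ≤ s + n) :
    |(growthFactor ρ s (n + 1))⁻¹ * u' - (growthFactor ρ s n)⁻¹ * u| ≤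
      (1 + |ρ|) * (growthFactor ρ s (n + 1))⁻¹ := by
  have hsn : 0 < s + n := by positivity
  have hdrift : |ρ / (s + n) * u| ≤ |ρ| := by
    rw [abs_mul, abs_div, abs_of_pos hsn]
    calc |ρ| / (s + n) * |u| ≤ |ρ| / (s + n) * (s + n) := by gcongr
      _ = |ρ| := div_mul_cancel₀ _ hsn.ne'
  have hsplit : (growthFactor ρ s (n + 1))⁻¹ * u' - (growthFactor ρ s n)⁻¹ * u =
      (growthFactor ρ s (n + 1))⁻¹ * ((u' - u) - ρ / (s + n) * u) := by
    have hprev : (growthFactor ρ s n)⁻¹ = (growthFactor ρ s (n + 1))⁻¹ * (1 + ρ / (s + n)) := by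
      rw [growthFactor_succ, mul_inv, mul_assoc,
        inv_mul_cancel₀ (one_add_div_add_natCast_pos hs hρs n).ne', mul_one]
    rw [hprev]
    ring
  have hinv := inv_pos.2 (growthFactor_pos hs hρs (n + 1))
  rw [hsplit, abs_mul, abs_of_pos hinv, mul_comm]
  exact mul_le_mul_of_nonneg_right ((abs_sub _ _).trans (add_le_add hstep hdrift)) hinv.le

namespace MeasureTheory.Martingale

variable {Ω : Type*} {m0 : MeasurableSpace Ω} {μ : Measure Ω} {ℱ : Filtration ℕ m0}
  {f : ℕ → Ω → ℝ} [IsFiniteMeasure μ]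

theorem integral_mul_succ (hf : Martingale f ℱ μ) (hL2 : ∀ n, MemLp (f n) 2 μ) (n : ℕ) :
    ∫ ω, f n ω * f (n + 1) ω ∂μ = ∫ ω, f n ω ^ 2 ∂μ := by
  have hmul : μ[f n * f (n + 1) | ℱ n] =ᵐ[μ] f n * f n :=
    (condExp_mul_of_stronglyMeasurable_left (hf.stronglyAdapted n)
      ((hL2 n).integrable_mul (hL2 (n + 1))) (hf.integrable (n + 1))).trans
      (EventuallyEq.rfl.mul (hf.condExp_ae_eq n.le_succ))
  calc ∫ ω, f n ω * f (n + 1) ω ∂μ = ∫ ω, μ[f n * f (n + 1) | ℱ n] ω ∂μ :=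
        (integral_condExp (ℱ.le n)).symm
    _ = ∫ ω, f n ω ^ 2 ∂μ := integral_congr_ae (hmul.trans (.of_eq (by ext; simp [sq])))

theorem integral_sq_succ (hf : Martingale f ℱ μ) (hL2 : ∀ n, MemLp (f n) 2 μ) (n : ℕ) :
    ∫ ω, f (n + 1) ω ^ 2 ∂μ = ∫ ω, f n ω ^ 2 ∂μ + ∫ ω, (f (n + 1) ω - f n ω) ^ 2 ∂μ := by
  have hprod : Integrable (fun ω => f n ω * f (n + 1) ω) μ :=
    (hL2 n).integrable_mul (hL2 (n + 1))
  have hsq (k : ℕ) : Integrable (fun ω => f k ω ^ 2) μ := (hL2 k).integrable_sq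
  have hexpand : (fun ω => (f (n + 1) ω - f n ω) ^ 2) =
      fun ω => f (n + 1) ω ^ 2 - 2 * (f n ω * f (n + 1) ω) + f n ω ^ 2 := by
    ext ω; ring
  have hcross : Integrable (fun ω => f (n + 1) ω ^ 2 - 2 * (f n ω * f (n + 1) ω)) μ :=
    (hsq _).sub (hprod.const_mul 2)
  rw [hexpand, integral_add hcross (hsq n), integral_sub (hsq _) (hprod.const_mul 2),
    integral_const_mul, integral_mul_succ hf hL2]
  ring

theorem integral_sq_le (hf : Martingale f ℱ μ) (hL2 : ∀ n, MemLp (f n) 2 μ)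
    (hsum : Summable fun n => ∫ ω, (f (n + 1) ω - f n ω) ^ 2 ∂μ) (n : ℕ) :
    ∫ ω, f n ω ^ 2 ∂μ ≤ ∫ ω, f 0 ω ^ 2 ∂μ + ∑' k, ∫ ω, (f (k + 1) ω - f k ω) ^ 2 ∂μ := by
  have hpartial : ∫ ω, f n ω ^ 2 ∂μ =
      ∫ ω, f 0 ω ^ 2 ∂μ + ∑ k ∈ range n, ∫ ω, (f (k + 1) ω - f k ω) ^ 2 ∂μ := by
    induction n with
    | zero => simp
    | succ n ih => rw [integral_sq_succ hf hL2, ih, sum_range_succ, add_assoc]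
  rw [hpartial]
  gcongr
  exact hsum.sum_le_tsum _ fun k _ => integral_nonneg fun ω => sq_nonneg _

end MeasureTheory.Martingale

theorem MeasureTheory.eLpNorm_one_le_of_integral_sq_le {Ω : Type*} {m0 : MeasurableSpace Ω}
    {μ : Measure Ω} [IsProbabilityMeasure μ] {f : Ω → ℝ} (hf : MemLp f 2 μ) {B : ℝ}
    (hB : ∫ ω, f ω ^ 2 ∂μ ≤ B) : eLpNorm f 1 μ ≤ ENNReal.ofReal ((B + 1) / 2) := by
  have hint : Integrable (fun ω => (f ω ^ 2 + 1) / 2) μ :=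
    (hf.integrable_sq.add (integrable_const 1)).div_const 2
  have hbound : ∫ ω, ‖f ω‖ ∂μ ≤ (B + 1) / 2 :=
    calc ∫ ω, ‖f ω‖ ∂μ ≤ ∫ ω, (f ω ^ 2 + 1) / 2 ∂μ :=
          integral_mono (hf.integrable one_le_two).norm hint fun ω => by
            nlinarith [sq_nonneg (|f ω| - 1), sq_abs (f ω), Real.norm_eq_abs (f ω)]
      _ = (∫ ω, f ω ^ 2 ∂μ + 1) / 2 := by
          rw [integral_div, integral_add hf.integrable_sq (integrable_const 1)]
          simp
      _ ≤ (B + 1) / 2 := by gcongr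
  rw [eLpNorm_one_eq_lintegral_enorm, ← ofReal_integral_norm_eq_lintegral_enorm
    (hf.integrable one_le_two)]
  exact ENNReal.ofReal_le_ofReal hbound

theorem MeasureTheory.Martingale.ae_tendsto_limitProcess_of_summable_integral_sq_sub
    {Ω : Type*} {m0 : MeasurableSpace Ω} {μ : Measure Ω} [IsProbabilityMeasure μ]
    {ℱ : Filtration ℕ m0} {f : ℕ → Ω → ℝ} (hf : Martingale f ℱ μ) (hL2 : ∀ n, MemLp (f n) 2 μ)
    (hsum : Summable fun n => ∫ ω, (f (n + 1) ω - f n ω) ^ 2 ∂μ) :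
    ∀ᵐ ω ∂μ, Tendsto (fun n => f n ω) atTop (𝓝 (ℱ.limitProcess f μ ω)) :=
  hf.submartingale.ae_tendsto_limitProcess (R := Real.toNNReal _) fun n =>
    eLpNorm_one_le_of_integral_sq_le (hL2 n) (hf.integral_sq_le hL2 hsum n)

theorem martingale_inv_prod_mul_of_condExp_succ {Ω : Type*} {m0 : MeasurableSpace Ω}
    {μ : Measure Ω} [IsFiniteMeasure μ] {ℱ : Filtration ℕ m0} {U : ℕ → Ω → ℝ} {a : ℕ → ℝ}
    (ha : ∀ n, a n ≠ 0) (hU : StronglyAdapted ℱ U) (hint : ∀ n, Integrable (U n) μ)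
    (hcond : ∀ n, μ[U (n + 1) | ℱ n] =ᵐ[μ] fun ω => a n * U n ω) :
    Martingale (fun n ω => (∏ k ∈ range n, a k)⁻¹ * U n ω) ℱ μ := by
  refine martingale_nat (fun n => (hU n).const_mul _) (fun n => (hint n).const_mul _) fun n => ?_
  filter_upwards [condExp_smul (μ := μ) (∏ k ∈ range (n + 1), a k)⁻¹ (U (n + 1)) (ℱ n),
    hcond n] with ω hsmul hω
  change _ = μ[(∏ k ∈ range (n + 1), a k)⁻¹ • U (n + 1) | ℱ n] ω
  rw [hsmul, Pi.smul_apply, hω, smul_eq_mul, prod_range_succ, mul_inv, mul_assoc,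
    inv_mul_cancel_left₀ (ha n)]

structure IsAuxiliaryUrnProcess {Ω : Type*} {m0 : MeasurableSpace Ω} (P : Measure Ω)
    (ℱ : Filtration ℕ m0) (α β : ℝ) (X Y : ℕ → Ω → ℕ) : Prop where
  measurable_X : ∀ n, Measurable[ℱ n] (X n)
  measurable_Y : ∀ n, Measurable[ℱ n] (Y n)
  step : ∀ n, ∀ᵐ ω ∂P,
    (X (n + 1) ω = X n ω + 1 ∧ Y (n + 1) ω = Y n ω) ∨
    (X (n + 1) ω = X n ω ∧ Y (n + 1) ω = Y n ω + 1)
  condExp_step_X : ∀ n,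
    P[({ω' | X (n + 1) ω' = X n ω' + 1 ∧ Y (n + 1) ω' = Y n ω'} : Set Ω).indicator
        (fun _ => (1 : ℝ)) | ℱ n]
      =ᵐ[P] fun ω => (α * (X n ω : ℝ) + β * (Y n ω : ℝ)) /
        ((α + β) * ((X n ω : ℝ) + (Y n ω : ℝ)))
  condExp_step_Y : ∀ n,
    P[({ω' | X (n + 1) ω' = X n ω' ∧ Y (n + 1) ω' = Y n ω' + 1} : Set Ω).indicator
        (fun _ => (1 : ℝ)) | ℱ n]
      =ᵐ[P] fun ω => (α * (Y n ω : ℝ) + β * (X n ω : ℝ)) /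
        ((α + β) * ((X n ω : ℝ) + (Y n ω : ℝ)))

namespace IsAuxiliaryUrnProcess

variable {Ω : Type*} {m0 : MeasurableSpace Ω} {P : Measure Ω} {ℱ : Filtration ℕ m0} {α β : ℝ}
  {X Y : ℕ → Ω → ℕ}

theorem ae_forall_add_eq (h : IsAuxiliaryUrnProcess P ℱ α β X Y) {x0 y0 : ℕ}
    (hX0 : ∀ ω, X 0 ω = x0) (hY0 : ∀ ω, Y 0 ω = y0) :
    ∀ᵐ ω ∂P, ∀ n, X n ω + Y n ω = x0 + y0 + n := by
  filter_upwards [ae_all_iff.2 h.step] with ω hω n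
  induction n with
  | zero => simp [hX0, hY0]
  | succ n ih => rcases hω n with ⟨h1, h2⟩ | ⟨h1, h2⟩ <;> omega

theorem stronglyMeasurable_sub (h : IsAuxiliaryUrnProcess P ℱ α β X Y) (n : ℕ) :
    StronglyMeasurable[ℱ n] fun ω => (X n ω : ℝ) - Y n ω :=
  ((measurable_from_nat.comp (h.measurable_X n)).sub
    (measurable_from_nat.comp (h.measurable_Y n))).stronglyMeasurable

theorem ae_forall_abs_sub_le (h : IsAuxiliaryUrnProcess P ℱ α β X Y) {x0 y0 : ℕ}
    (hX0 : ∀ ω, X 0 ω = x0) (hY0 : ∀ ω, Y 0 ω = y0) :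
    ∀ᵐ ω ∂P, ∀ n, |(X n ω : ℝ) - Y n ω| ≤ x0 + y0 + n := by
  filter_upwards [h.ae_forall_add_eq hX0 hY0] with ω hω n
  have hsum : (X n ω : ℝ) + Y n ω = x0 + y0 + n := by exact_mod_cast hω n
  rw [abs_le]
  constructor <;> linarith [(X n ω).cast_nonneg (α := ℝ), (Y n ω).cast_nonneg (α := ℝ)]

theorem ae_abs_sub_succ_sub_le (h : IsAuxiliaryUrnProcess P ℱ α β X Y) (n : ℕ) :
    ∀ᵐ ω ∂P, |((X (n + 1) ω : ℝ) - Y (n + 1) ω) - ((X n ω : ℝ) - Y n ω)| ≤ 1 := by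
  filter_upwards [h.step n] with ω hω
  rcases hω with ⟨h1, h2⟩ | ⟨h1, h2⟩ <;> simp [h1, h2]

theorem memLp_sub [IsFiniteMeasure P] (h : IsAuxiliaryUrnProcess P ℱ α β X Y) {x0 y0 : ℕ}
    (hX0 : ∀ ω, X 0 ω = x0) (hY0 : ∀ ω, Y 0 ω = y0) (p : ENNReal) (n : ℕ) :
    MemLp (fun ω => (X n ω : ℝ) - Y n ω) p P :=
  MemLp.of_bound ((h.stronglyMeasurable_sub n).mono (ℱ.le n)).aestronglyMeasurable
    (x0 + y0 + n) <| (h.ae_forall_abs_sub_le hX0 hY0).mono fun _ hω => hω n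

theorem sub_succ_ae_eq (h : IsAuxiliaryUrnProcess P ℱ α β X Y) (n : ℕ) :
    (fun ω => (X (n + 1) ω : ℝ) - Y (n + 1) ω) =ᵐ[P] (fun ω => (X n ω : ℝ) - Y n ω) +
      (({ω' | X (n + 1) ω' = X n ω' + 1 ∧ Y (n + 1) ω' = Y n ω'} : Set Ω).indicator
          (fun _ => (1 : ℝ)) -
        ({ω' | X (n + 1) ω' = X n ω' ∧ Y (n + 1) ω' = Y n ω' + 1} : Set Ω).indicator
          (fun _ => (1 : ℝ))) := by
  filter_upwards [h.step n] with ω hω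
  rcases hω with ⟨h1, h2⟩ | ⟨h1, h2⟩ <;>
    simp [h1, h2] <;> ring

theorem condExp_sub_succ [IsFiniteMeasure P] (h : IsAuxiliaryUrnProcess P ℱ α β X Y)
    {x0 y0 : ℕ} (hX0 : ∀ ω, X 0 ω = x0) (hY0 : ∀ ω, Y 0 ω = y0) (n : ℕ) :
    P[fun ω => (X (n + 1) ω : ℝ) - Y (n + 1) ω | ℱ n] =ᵐ[P] fun ω =>
      (1 + (α - β) / (α + β) / (x0 + y0 + n)) * ((X n ω : ℝ) - Y n ω) := by
  set A : Set Ω := {ω' | X (n + 1) ω' = X n ω' + 1 ∧ Y (n + 1) ω' = Y n ω'}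
  set B : Set Ω := {ω' | X (n + 1) ω' = X n ω' ∧ Y (n + 1) ω' = Y n ω' + 1}
  have hXm (k : ℕ) : Measurable (X k) := (h.measurable_X k).mono (ℱ.le k) le_rfl
  have hYm (k : ℕ) : Measurable (Y k) := (h.measurable_Y k).mono (ℱ.le k) le_rfl
  have hA : Integrable (A.indicator fun _ => (1 : ℝ)) P :=
    (integrable_const 1).indicator <| (measurableSet_eq_fun (hXm _)
      (measurable_from_nat.comp (hXm n))).inter (measurableSet_eq_fun (hYm _) (hYm n))
  have hB : Integrable (B.indicator fun _ => (1 : ℝ)) P :=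
    (integrable_const 1).indicator <| (measurableSet_eq_fun (hXm _) (hXm n)).inter
      (measurableSet_eq_fun (hYm _) (measurable_from_nat.comp (hYm n)))
  have hU := (h.memLp_sub hX0 hY0 1 n).integrable le_rfl
  filter_upwards [condExp_congr_ae (m := ℱ n) (h.sub_succ_ae_eq n),
    condExp_add (m := ℱ n) hU (hA.sub hB), condExp_sub (m := ℱ n) hA hB,
    h.condExp_step_X n, h.condExp_step_Y n, h.ae_forall_add_eq hX0 hY0]
    with ω hcongr hadd hsub hup hdown hsum
  have hsum' : (X n ω : ℝ) + Y n ω = x0 + y0 + n := by exact_mod_cast hsum n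
  have hcur : P[fun ω => (X n ω : ℝ) - Y n ω | ℱ n] = fun ω => (X n ω : ℝ) - Y n ω :=
    condExp_of_stronglyMeasurable (ℱ.le n) (h.stronglyMeasurable_sub n) hU
  rw [hcongr.trans hadd, Pi.add_apply, hsub, Pi.sub_apply, hup, hdown, hcur, ← sub_div, ← hsum',
    show α * (X n ω : ℝ) + β * Y n ω - (α * Y n ω + β * X n ω) = (α - β) * (X n ω - Y n ω) by
      ring, mul_div_mul_comm]
  ring

theorem martingale_inv_growthFactor_mul [IsFiniteMeasure P]
    (h : IsAuxiliaryUrnProcess P ℱ α β X Y) {x0 y0 : ℕ} (hX0 : ∀ ω, X 0 ω = x0)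
    (hY0 : ∀ ω, Y 0 ω = y0) (hs : 0 < (x0 + y0 : ℝ)) (hρs : 0 < x0 + y0 + (α - β) / (α + β)) :
    Martingale (fun n ω => (growthFactor ((α - β) / (α + β)) (x0 + y0) n)⁻¹ *
      ((X n ω : ℝ) - Y n ω)) ℱ P :=
  martingale_inv_prod_mul_of_condExp_succ (fun n => (one_add_div_add_natCast_pos hs hρs n).ne')
    h.stronglyMeasurable_sub (fun n => (h.memLp_sub hX0 hY0 1 n).integrable le_rfl)
    (h.condExp_sub_succ hX0 hY0)

theorem exists_ae_tendsto_inv_growthFactor_mul [IsProbabilityMeasure P]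
    (h : IsAuxiliaryUrnProcess P ℱ α β X Y) {x0 y0 : ℕ} (hX0 : ∀ ω, X 0 ω = x0)
    (hY0 : ∀ ω, Y 0 ω = y0) (hs : 0 < (x0 + y0 : ℝ)) (hρ : 1 / 2 < (α - β) / (α + β)) :
    ∃ L : Ω → ℝ, ∀ᵐ ω ∂P, Tendsto (fun n => (growthFactor ((α - β) / (α + β)) (x0 + y0) n)⁻¹ *
      ((X n ω : ℝ) - Y n ω)) atTop (𝓝 (L ω)) := by
  set ρ := (α - β) / (α + β)
  set c := growthFactor ρ (x0 + y0)
  have hρs : 0 < x0 + y0 + ρ := by linarith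
  have hmart := h.martingale_inv_growthFactor_mul hX0 hY0 hs hρs
  have hincr (n : ℕ) : ∫ ω, ((c (n + 1))⁻¹ * ((X (n + 1) ω : ℝ) - Y (n + 1) ω) -
      (c n)⁻¹ * ((X n ω : ℝ) - Y n ω)) ^ 2 ∂P ≤ (1 + |ρ|) ^ 2 * (c (n + 1))⁻¹ ^ 2 := by
    refine (Real.le_norm_self _).trans ((norm_integral_le_of_norm_le_const
      (C := (1 + |ρ|) ^ 2 * (c (n + 1))⁻¹ ^ 2) ?_).trans_eq (by rw [probReal_univ, mul_one]))
    filter_upwards [h.ae_abs_sub_succ_sub_le n, h.ae_forall_abs_sub_le hX0 hY0]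
      with ω hstep hbound
    rw [Real.norm_eq_abs, abs_pow, ← mul_pow]
    exact pow_le_pow_left₀ (abs_nonneg _)
      (abs_inv_growthFactor_mul_sub_le hs hρs hstep (hbound n)) 2
  refine ⟨_, hmart.ae_tendsto_limitProcess_of_summable_integral_sq_sub
    (fun n => (h.memLp_sub hX0 hY0 2 n).const_mul _) ?_⟩
  refine Summable.of_nonneg_of_le (fun n => integral_nonneg fun ω => sq_nonneg _) hincr ?_
  exact ((summable_nat_add_iff 1).2 (summable_inv_growthFactor_sq hs hρ)).mul_left _

end IsAuxiliaryUrnProcess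

theorem stmt_0_general
    {Ω : Type*} {m0 : MeasurableSpace Ω} (P : Measure Ω) [IsProbabilityMeasure P]
    (ℱ : Filtration ℕ m0)
    (α β : ℝ)
    (ρ : ℝ) (hρ : ρ = (α - β) / (α + β))
    (x0 y0 : ℕ) (hx0y0 : 1 ≤ x0 + y0)
    (X Y : ℕ → Ω → ℕ)
    (hXmeas : ∀ n, Measurable[ℱ n] (X n)) (hYmeas : ∀ n, Measurable[ℱ n] (Y n))
    (hX0 : ∀ ω, X 0 ω = x0) (hY0 : ∀ ω, Y 0 ω = y0)
    (hstep : ∀ n, ∀ᵐ ω ∂P,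
      (X (n + 1) ω = X n ω + 1 ∧ Y (n + 1) ω = Y n ω) ∨
      (X (n + 1) ω = X n ω ∧ Y (n + 1) ω = Y n ω + 1))
    (hup : ∀ n,
      P[({ω' | X (n + 1) ω' = X n ω' + 1 ∧ Y (n + 1) ω' = Y n ω'} : Set Ω).indicator
          (fun _ => (1 : ℝ)) | ℱ n]
        =ᵐ[P] fun ω => (α * (X n ω : ℝ) + β * (Y n ω : ℝ)) /
          ((α + β) * ((X n ω : ℝ) + (Y n ω : ℝ))))
    (hdown : ∀ n,
      P[({ω' | X (n + 1) ω' = X n ω' ∧ Y (n + 1) ω' = Y n ω' + 1} : Set Ω).indicator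
          (fun _ => (1 : ℝ)) | ℱ n]
        =ᵐ[P] fun ω => (α * (Y n ω : ℝ) + β * (X n ω : ℝ)) /
          ((α + β) * ((X n ω : ℝ) + (Y n ω : ℝ))))
    (hρhalf : 1 / 2 < ρ) :
    ∃ L : Ω → ℝ, ∀ᵐ ω ∂P,
      Tendsto (fun n : ℕ => (n : ℝ) ^ (-ρ) * ((X n ω : ℝ) - (Y n ω : ℝ)))
        atTop (nhds (L ω)) := by
  subst hρ
  have hs : (0 : ℝ) < x0 + y0 := by exact_mod_cast hx0y0
  have hρs : 0 < (x0 + y0 : ℝ) + (α - β) / (α + β) := by linarith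
  have h : IsAuxiliaryUrnProcess P ℱ α β X Y := ⟨hXmeas, hYmeas, hstep, hup, hdown⟩
  obtain ⟨L, hL⟩ := h.exists_ae_tendsto_inv_growthFactor_mul hX0 hY0 hs hρhalf
  refine ⟨fun ω => Real.Gamma (x0 + y0) / Real.Gamma (x0 + y0 + (α - β) / (α + β)) * L ω, ?_⟩
  filter_upwards [hL] with ω hω
  refine ((tendsto_rpow_neg_mul_growthFactor hs hρs).mul hω).congr fun n => ?_
  rw [mul_assoc, mul_inv_cancel_left₀ (growthFactor_pos hs hρs n).ne']

/-- For the auxiliary process `(Xₙ, Yₙ)` associated with Friedman's urn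
model, if `ρ = (α − β)/(α + β) > 1/2`, then `n^{−ρ}·Uₙ = n^{−ρ}(Xₙ − Yₙ)` converges
almost surely to a (finite, real-valued) random variable `L`. -/
theorem stmt_0
    {Ω : Type*} {m0 : MeasurableSpace Ω} (P : Measure Ω) [IsProbabilityMeasure P]
    (ℱ : Filtration ℕ m0)
    (α β : ℝ) (hα : 0 ≤ α) (hβ : 0 ≤ β) (hαβ : 0 < α + β)
    (ρ : ℝ) (hρ : ρ = (α - β) / (α + β))
    (x0 y0 : ℕ) (hx0y0 : 1 ≤ x0 + y0)
    (X Y : ℕ → Ω → ℕ)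
    (hXmeas : ∀ n, Measurable[ℱ n] (X n)) (hYmeas : ∀ n, Measurable[ℱ n] (Y n))
    (hX0 : ∀ ω, X 0 ω = x0) (hY0 : ∀ ω, Y 0 ω = y0)
    (hstep : ∀ n, ∀ᵐ ω ∂P,
      (X (n + 1) ω = X n ω + 1 ∧ Y (n + 1) ω = Y n ω) ∨
      (X (n + 1) ω = X n ω ∧ Y (n + 1) ω = Y n ω + 1))
    (hup : ∀ n,
      P[({ω' | X (n + 1) ω' = X n ω' + 1 ∧ Y (n + 1) ω' = Y n ω'} : Set Ω).indicator
          (fun _ => (1 : ℝ)) | ℱ n]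
        =ᵐ[P] fun ω => (α * (X n ω : ℝ) + β * (Y n ω : ℝ)) /
          ((α + β) * ((X n ω : ℝ) + (Y n ω : ℝ))))
    (hdown : ∀ n,
      P[({ω' | X (n + 1) ω' = X n ω' ∧ Y (n + 1) ω' = Y n ω' + 1} : Set Ω).indicator
          (fun _ => (1 : ℝ)) | ℱ n]
        =ᵐ[P] fun ω => (α * (Y n ω : ℝ) + β * (X n ω : ℝ)) /
          ((α + β) * ((X n ω : ℝ) + (Y n ω : ℝ))))
    (hρhalf : 1 / 2 < ρ) :
    ∃ L : Ω → ℝ, ∀ᵐ ω ∂P,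
      Tendsto (fun n : ℕ => (n : ℝ) ^ (-ρ) * ((X n ω : ℝ) - (Y n ω : ℝ)))
        atTop (nhds (L ω)) :=
  stmt_0_general P ℱ α β ρ hρ x0 y0 hx0y0 X Y hXmeas hYmeas hX0 hY0 hstep hup hdown hρhalf
end

section
/- For every n ≥ 0, almost surely E[U_{n+1} | 𝓕_n] = U_n·a_n(1) and E[U_{n+1}² | 𝓕_n] = U_n²·a_n(2) + 1. -/
/-!
Write `U_{n+1} = U_n + D_n`, where the increment `D_n = 1_{up} - 1_{down}` is `±1`, so `D_n² = 1`.
Pulling out the `𝓕_n`-measurable `U_n` gives `E[U_{n+1} | 𝓕_n] = U_n + E[D_n | 𝓕_n]` and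
`E[U_{n+1}² | 𝓕_n] = U_n² + 2 U_n E[D_n | 𝓕_n] + 1`, and the transition probabilities give the drift
`E[D_n | 𝓕_n] = (α - β) U_n / ((α + β) S_n)`. Since `S_n = x₀ + y₀ + n` almost surely,
`(α + β) S_n = s + (α + β) n`, which produces the factors `a_n(1)` and `a_n(2)`.
-/

open MeasureTheory Filter

section CondExp

variable {Ω : Type*} {m m0 : MeasurableSpace Ω} {μ : Measure Ω} {V D : Ω → ℝ}

theorem condExp_add_of_stronglyMeasurable_left (hm : m ≤ m0) [SigmaFinite (μ.trim hm)]
    (hV : StronglyMeasurable[m] V) (hVi : Integrable V μ) (hD : Integrable D μ) :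
    μ[V + D | m] =ᵐ[μ] V + μ[D | m] :=
  (condExp_add hVi hD m).trans (by rw [condExp_of_stronglyMeasurable hm hV hVi])

theorem condExp_add_sq_of_sq_eq_one [IsFiniteMeasure μ] (hm : m ≤ m0)
    (hV : StronglyMeasurable[m] V) {C : ℝ} (hVC : ∀ᵐ ω ∂μ, |V ω| ≤ C)
    (hD : Integrable D μ) (hD2 : ∀ᵐ ω ∂μ, D ω ^ 2 = 1) :
    μ[(V + D) ^ 2 | m] =ᵐ[μ] V ^ 2 + 2 * V * μ[D | m] + 1 := by
  have hV0 : AEStronglyMeasurable V μ := (hV.mono hm).aestronglyMeasurable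
  have hVi : Integrable V μ := .of_bound hV0 C (by simpa using hVC)
  have hVsq : Integrable (V ^ 2 + 1) μ :=
    ((hVi.mul_bdd hV0 (c := C) (by simpa using hVC)).congr
      (.of_forall fun ω => (sq (V ω)).symm)).add (integrable_const 1)
  have hVD : Integrable (2 * V * D) μ :=
    hD.bdd_mul (c := 2 * C) (hV0.const_mul 2) (by filter_upwards [hVC] with ω h; simp; linarith)
  have hexpand : (V + D) ^ 2 =ᵐ[μ] (V ^ 2 + 1) + 2 * V * D := by
    filter_upwards [hD2] with ω h
    simp only [Pi.add_apply, Pi.pow_apply, Pi.mul_apply, Pi.ofNat_apply]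
    linear_combination h
  calc μ[(V + D) ^ 2 | m] =ᵐ[μ] μ[(V ^ 2 + 1) + 2 * V * D | m] := condExp_congr_ae hexpand
    _ =ᵐ[μ] (V ^ 2 + 1) + μ[2 * V * D | m] :=
      condExp_add_of_stronglyMeasurable_left hm ((hV.pow 2).add stronglyMeasurable_const) hVsq hVD
    _ =ᵐ[μ] (V ^ 2 + 1) + 2 * V * μ[D | m] :=
      (EventuallyEq.refl _ _).add
        (condExp_mul_of_stronglyMeasurable_left (stronglyMeasurable_const.mul hV) hVD hD)
    _ = V ^ 2 + 2 * V * μ[D | m] + 1 := by ring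

end CondExp

section Urn

variable {Ω : Type*} {m0 : MeasurableSpace Ω} {P : Measure Ω} {X Y : ℕ → Ω → ℕ}

def urnDiff (X Y : ℕ → Ω → ℕ) (n : ℕ) (ω : Ω) : ℝ := (X n ω : ℝ) - Y n ω

def IsUnitStep (X Y : ℕ → Ω → ℕ) (n : ℕ) (ω : Ω) : Prop :=
  (X (n + 1) ω = X n ω + 1 ∧ Y (n + 1) ω = Y n ω) ∨ (X (n + 1) ω = X n ω ∧ Y (n + 1) ω = Y n ω + 1)

theorem ae_add_eq_of_step {x0 y0 : ℕ} (hX0 : ∀ ω, X 0 ω = x0) (hY0 : ∀ ω, Y 0 ω = y0)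
    (hstep : ∀ n, ∀ᵐ ω ∂P, IsUnitStep X Y n ω) (n : ℕ) :
    ∀ᵐ ω ∂P, X n ω + Y n ω = x0 + y0 + n := by
  induction n with
  | zero => exact .of_forall fun ω => by simp [hX0, hY0]
  | succ k ih =>
    filter_upwards [hstep k, ih] with ω hω hk
    rcases hω with ⟨hx, hy⟩ | ⟨hx, hy⟩ <;> omega

theorem ae_abs_urnDiff_le {x0 y0 : ℕ} (hX0 : ∀ ω, X 0 ω = x0) (hY0 : ∀ ω, Y 0 ω = y0)
    (hstep : ∀ n, ∀ᵐ ω ∂P, IsUnitStep X Y n ω) (n : ℕ) :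
    ∀ᵐ ω ∂P, |urnDiff X Y n ω| ≤ x0 + y0 + n := by
  filter_upwards [ae_add_eq_of_step hX0 hY0 hstep n] with ω hω
  have hsum : (X n ω : ℝ) + Y n ω = x0 + y0 + n := by exact_mod_cast hω
  rw [urnDiff, abs_le]
  constructor <;> linarith [(X n ω).cast_nonneg (α := ℝ), (Y n ω).cast_nonneg (α := ℝ)]

theorem urnDiff_stronglyMeasurable {m : MeasurableSpace Ω} {n : ℕ}
    (hX : Measurable[m] (X n)) (hY : Measurable[m] (Y n)) :
    StronglyMeasurable[m] (urnDiff X Y n) :=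
  ((measurable_from_top.comp hX).sub (measurable_from_top.comp hY)).stronglyMeasurable

theorem integrable_urnDiff [IsFiniteMeasure P] {x0 y0 n : ℕ}
    (hX : Measurable (X n)) (hY : Measurable (Y n))
    (hX0 : ∀ ω, X 0 ω = x0) (hY0 : ∀ ω, Y 0 ω = y0) (hstep : ∀ k, ∀ᵐ ω ∂P, IsUnitStep X Y k ω) :
    Integrable (urnDiff X Y n) P :=
  .of_bound (urnDiff_stronglyMeasurable hX hY).aestronglyMeasurable _
    (by simpa using ae_abs_urnDiff_le hX0 hY0 hstep n)

theorem ae_urnDiff_succ_sub_sq_eq_one {n : ℕ} (hstep : ∀ᵐ ω ∂P, IsUnitStep X Y n ω) :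
    ∀ᵐ ω ∂P, (urnDiff X Y (n + 1) - urnDiff X Y n) ω ^ 2 = 1 := by
  filter_upwards [hstep] with ω hω
  rcases hω with ⟨hx, hy⟩ | ⟨hx, hy⟩ <;> simp [urnDiff, hx, hy]

theorem condExp_urnDiff_succ_sub [IsFiniteMeasure P] {ℱ : Filtration ℕ m0} {α β : ℝ} {n : ℕ}
    (hX : ∀ k, Measurable (X k)) (hY : ∀ k, Measurable (Y k))
    (hstep : ∀ᵐ ω ∂P, IsUnitStep X Y n ω)
    (hup : P[({ω' | X (n + 1) ω' = X n ω' + 1 ∧ Y (n + 1) ω' = Y n ω'} : Set Ω).indicator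
          (fun _ => (1 : ℝ)) | ℱ n]
        =ᵐ[P] fun ω => (α * (X n ω : ℝ) + β * (Y n ω : ℝ)) /
          ((α + β) * ((X n ω : ℝ) + (Y n ω : ℝ))))
    (hdown : P[({ω' | X (n + 1) ω' = X n ω' ∧ Y (n + 1) ω' = Y n ω' + 1} : Set Ω).indicator
          (fun _ => (1 : ℝ)) | ℱ n]
        =ᵐ[P] fun ω => (α * (Y n ω : ℝ) + β * (X n ω : ℝ)) /
          ((α + β) * ((X n ω : ℝ) + (Y n ω : ℝ)))) :
    P[urnDiff X Y (n + 1) - urnDiff X Y n | ℱ n] =ᵐ[P]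
      fun ω => (α - β) * urnDiff X Y n ω / ((α + β) * ((X n ω : ℝ) + Y n ω)) := by
  set up : Set Ω := {ω' | X (n + 1) ω' = X n ω' + 1 ∧ Y (n + 1) ω' = Y n ω'}
  set down : Set Ω := {ω' | X (n + 1) ω' = X n ω' ∧ Y (n + 1) ω' = Y n ω' + 1}
  have hup_meas : MeasurableSet up :=
    (measurableSet_eq_fun (hX _) ((hX n).add_const 1)).inter (measurableSet_eq_fun (hY _) (hY n))
  have hdown_meas : MeasurableSet down :=
    (measurableSet_eq_fun (hX _) (hX n)).inter (measurableSet_eq_fun (hY _) ((hY n).add_const 1))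
  have hincr : urnDiff X Y (n + 1) - urnDiff X Y n =ᵐ[P]
      up.indicator (fun _ => 1) - down.indicator (fun _ => 1) := by
    filter_upwards [hstep] with ω hω
    rcases hω with ⟨hx, hy⟩ | ⟨hx, hy⟩
    · have hω_down : ω ∉ down := fun h => by simp_all [down]
      simp [urnDiff, hx, hy, up, hω_down]
    · have hω_up : ω ∉ up := fun h => by simp_all [up]
      simp [urnDiff, hx, hy, down, hω_up]
  calc P[urnDiff X Y (n + 1) - urnDiff X Y n | ℱ n]
      =ᵐ[P] P[up.indicator (fun _ => 1) - down.indicator (fun _ => 1) | ℱ n] :=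
        condExp_congr_ae hincr
    _ =ᵐ[P] P[up.indicator (fun _ => 1) | ℱ n] - P[down.indicator (fun _ => 1) | ℱ n] :=
        condExp_sub ((integrable_const 1).indicator hup_meas)
          ((integrable_const 1).indicator hdown_meas) _
    _ =ᵐ[P] _ := hup.sub hdown
    _ = _ := by funext ω; simp only [Pi.sub_apply, urnDiff]; ring

end Urn

theorem stmt_1_general
    {Ω : Type*} {m0 : MeasurableSpace Ω} (P : Measure Ω) [IsProbabilityMeasure P]
    (ℱ : Filtration ℕ m0)
    (α β : ℝ)
    (x0 y0 : ℕ)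
    (X Y : ℕ → Ω → ℕ)
    (hXmeas : ∀ n, Measurable[ℱ n] (X n)) (hYmeas : ∀ n, Measurable[ℱ n] (Y n))
    (hX0 : ∀ ω, X 0 ω = x0) (hY0 : ∀ ω, Y 0 ω = y0)
    (hstep : ∀ n, ∀ᵐ ω ∂P,
      (X (n + 1) ω = X n ω + 1 ∧ Y (n + 1) ω = Y n ω) ∨
      (X (n + 1) ω = X n ω ∧ Y (n + 1) ω = Y n ω + 1))
    (hup : ∀ n,
      P[({ω' | X (n + 1) ω' = X n ω' + 1 ∧ Y (n + 1) ω' = Y n ω'} : Set Ω).indicator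
          (fun _ => (1 : ℝ)) | ℱ n]
        =ᵐ[P] fun ω => (α * (X n ω : ℝ) + β * (Y n ω : ℝ)) /
          ((α + β) * ((X n ω : ℝ) + (Y n ω : ℝ))))
    (hdown : ∀ n,
      P[({ω' | X (n + 1) ω' = X n ω' ∧ Y (n + 1) ω' = Y n ω' + 1} : Set Ω).indicator
          (fun _ => (1 : ℝ)) | ℱ n]
        =ᵐ[P] fun ω => (α * (Y n ω : ℝ) + β * (X n ω : ℝ)) /
          ((α + β) * ((X n ω : ℝ) + (Y n ω : ℝ))))
    (s : ℝ) (hs : s = (α + β) * ((x0 : ℝ) + (y0 : ℝ)))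
    (a : ℕ → ℕ → ℝ) (ha : ∀ n j, a n j = 1 + (α - β) * (j : ℝ) / (s + (α + β) * (n : ℝ))) :
    ∀ n : ℕ,
      (P[fun ω => ((X (n + 1) ω : ℝ) - (Y (n + 1) ω : ℝ)) | ℱ n]
        =ᵐ[P] fun ω => ((X n ω : ℝ) - (Y n ω : ℝ)) * a n 1) ∧
      (P[fun ω => ((X (n + 1) ω : ℝ) - (Y (n + 1) ω : ℝ)) ^ 2 | ℱ n]
        =ᵐ[P] fun ω => ((X n ω : ℝ) - (Y n ω : ℝ)) ^ 2 * a n 2 + 1) := by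
  intro n
  have hX k : Measurable (X k) := (hXmeas k).mono (ℱ.le k) le_rfl
  have hY k : Measurable (Y k) := (hYmeas k).mono (ℱ.le k) le_rfl
  have hU := urnDiff_stronglyMeasurable (hXmeas n) (hYmeas n)
  have hU_bound := ae_abs_urnDiff_le hX0 hY0 hstep n
  have hincr_int : Integrable (urnDiff X Y (n + 1) - urnDiff X Y n) P :=
    (integrable_urnDiff (hX _) (hY _) hX0 hY0 hstep).sub
      (integrable_urnDiff (hX _) (hY _) hX0 hY0 hstep)
  have hdrift := condExp_urnDiff_succ_sub hX hY (hstep n) (hup n) (hdown n)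
  have hdenom : ∀ᵐ ω ∂P, (α + β) * ((X n ω : ℝ) + Y n ω) = s + (α + β) * n := by
    filter_upwards [ae_add_eq_of_step hX0 hY0 hstep n] with ω hω
    rw [hs, ← Nat.cast_add, hω]
    push_cast
    ring
  have hsplit : urnDiff X Y (n + 1) = urnDiff X Y n + (urnDiff X Y (n + 1) - urnDiff X Y n) :=
    (add_sub_cancel _ _).symm
  constructor
  · change P[urnDiff X Y (n + 1) | ℱ n] =ᵐ[P] _
    rw [hsplit]
    filter_upwards [condExp_add_of_stronglyMeasurable_left (ℱ.le n) hU
      (integrable_urnDiff (hX n) (hY n) hX0 hY0 hstep) hincr_int, hdrift, hdenom]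
      with ω h_split h_drift h_denom
    rw [h_split, Pi.add_apply, h_drift, h_denom, ha]
    simp only [urnDiff]
    ring
  · change P[urnDiff X Y (n + 1) ^ 2 | ℱ n] =ᵐ[P] _
    rw [hsplit]
    filter_upwards [condExp_add_sq_of_sq_eq_one (ℱ.le n) hU hU_bound hincr_int
      (ae_urnDiff_succ_sub_sq_eq_one (hstep n)), hdrift, hdenom] with ω h_split h_drift h_denom
    rw [h_split, Pi.add_apply, Pi.add_apply, Pi.mul_apply, h_drift, h_denom, ha]
    simp only [urnDiff, Pi.pow_apply, Pi.mul_apply, Pi.ofNat_apply]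
    ring

/-- For the auxiliary process `(Xₙ, Yₙ)`, with `Uₙ = Xₙ − Yₙ`,
`s = (α + β)(x₀ + y₀)` and `aₙ(j) = 1 + (α − β)j/(s + (α + β)n)`, one has, for every
`n ≥ 0`, almost surely `E[U_{n+1} | ℱ n] = Uₙ·aₙ(1)` and
`E[U_{n+1}² | ℱ n] = Uₙ²·aₙ(2) + 1`. -/
theorem stmt_1
    {Ω : Type*} {m0 : MeasurableSpace Ω} (P : Measure Ω) [IsProbabilityMeasure P]
    (ℱ : Filtration ℕ m0)
    (α β : ℝ) (hα : 0 ≤ α) (hβ : 0 ≤ β) (hαβ : 0 < α + β)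
    (ρ : ℝ) (hρ : ρ = (α - β) / (α + β))
    (x0 y0 : ℕ) (hx0y0 : 1 ≤ x0 + y0)
    (X Y : ℕ → Ω → ℕ)
    (hXmeas : ∀ n, Measurable[ℱ n] (X n)) (hYmeas : ∀ n, Measurable[ℱ n] (Y n))
    (hX0 : ∀ ω, X 0 ω = x0) (hY0 : ∀ ω, Y 0 ω = y0)
    (hstep : ∀ n, ∀ᵐ ω ∂P,
      (X (n + 1) ω = X n ω + 1 ∧ Y (n + 1) ω = Y n ω) ∨
      (X (n + 1) ω = X n ω ∧ Y (n + 1) ω = Y n ω + 1))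
    (hup : ∀ n,
      P[({ω' | X (n + 1) ω' = X n ω' + 1 ∧ Y (n + 1) ω' = Y n ω'} : Set Ω).indicator
          (fun _ => (1 : ℝ)) | ℱ n]
        =ᵐ[P] fun ω => (α * (X n ω : ℝ) + β * (Y n ω : ℝ)) /
          ((α + β) * ((X n ω : ℝ) + (Y n ω : ℝ))))
    (hdown : ∀ n,
      P[({ω' | X (n + 1) ω' = X n ω' ∧ Y (n + 1) ω' = Y n ω' + 1} : Set Ω).indicator
          (fun _ => (1 : ℝ)) | ℱ n]
        =ᵐ[P] fun ω => (α * (Y n ω : ℝ) + β * (X n ω : ℝ)) /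
          ((α + β) * ((X n ω : ℝ) + (Y n ω : ℝ))))
    (s : ℝ) (hs : s = (α + β) * ((x0 : ℝ) + (y0 : ℝ)))
    (a : ℕ → ℕ → ℝ) (ha : ∀ n j, a n j = 1 + (α - β) * (j : ℝ) / (s + (α + β) * (n : ℝ))) :
    ∀ n : ℕ,
      (P[fun ω => ((X (n + 1) ω : ℝ) - (Y (n + 1) ω : ℝ)) | ℱ n]
        =ᵐ[P] fun ω => ((X n ω : ℝ) - (Y n ω : ℝ)) * a n 1) ∧
      (P[fun ω => ((X (n + 1) ω : ℝ) - (Y (n + 1) ω : ℝ)) ^ 2 | ℱ n]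
        =ᵐ[P] fun ω => ((X n ω : ℝ) - (Y n ω : ℝ)) ^ 2 * a n 2 + 1) :=
  stmt_1_general P ℱ α β x0 y0 X Y hXmeas hYmeas hX0 hY0 hstep hup hdown s hs a ha
end

section
/- Let (𝓖_n)_{n≥0} be a filtration and (Z_n)_{n≥0} an (𝓖_n)-adapted real-valued process with Z_0 integrable, and let B > 0, a > 0 and σ ≥ 0 be constants such that for every n, almost surely |Z_{n+1} − Z_n| ≤ B, Z_n > 0, and a ≤ E[Z_{n+1} − Z_n | 𝓖_n] ≤ a + σ/Z_n. Then Z_n/n → a almost surely as n → ∞. -/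
open MeasureTheory Filter Finset Topology

/-!
The centred increments `D k = (ΔZ k - E[ΔZ k | 𝒢 k]) / (k + 1)` are martingale differences
bounded by `2B / (k + 1)`. Being orthogonal in `L²`, their partial sums form an `L²`-bounded,
hence a.s. convergent, martingale. Kronecker's lemma turns this into
`(Z n - Z 0 - ∑_{k<n} E[ΔZ k | 𝒢 k]) / n → 0`, and the drift bounds squeeze the average
drift to `a`: the lower bound forces `Z n ≥ a n / 2` eventually, so `σ / Z n → 0`.
-/

theorem tendsto_sum_range_div_of_tendsto_sum_div_succ {x : ℕ → ℝ} {s : ℝ}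
    (h : Tendsto (fun n => ∑ k ∈ range n, x k / (k + 1)) atTop (𝓝 s)) :
    Tendsto (fun n => (∑ k ∈ range n, x k) / n) atTop (𝓝 0) := by
  set t : ℕ → ℝ := fun n => ∑ k ∈ range n, x k / (k + 1)
  have h_abel : ∀ n, ∑ k ∈ range n, x k = n * t n - ∑ k ∈ range n, t k := by
    intro n
    induction n with
    | zero => simp
    | succ n ih =>
      have hn : (n + 1 : ℝ) ≠ 0 := by positivity
      simp only [t, sum_range_succ] at ih ⊢
      rw [ih]
      push_cast
      field_simp
      ring
  have h_lim : Tendsto (fun n => t n - (n : ℝ)⁻¹ * ∑ k ∈ range n, t k) atTop (𝓝 0) := by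
    simpa only [sub_self] using h.sub h.cesaro
  refine h_lim.congr' ?_
  filter_upwards [eventually_ne_atTop 0] with n hn
  rw [h_abel n]
  field_simp

theorem tendsto_div_natCast_of_drift_bounds {z g : ℕ → ℝ} {a σ s : ℝ} (ha : 0 < a)
    (hg_low : ∀ n, a ≤ g n) (hg_up : ∀ n, g n ≤ a + σ / z n)
    (h_series :
      Tendsto (fun n => ∑ k ∈ range n, (z (k + 1) - z k - g k) / (k + 1)) atTop (𝓝 s)) :
    Tendsto (fun n => z n / n) atTop (𝓝 a) := by
  have h : Tendsto (fun n => z n / n - (∑ k ∈ range n, g k) / n) atTop (𝓝 0) := by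
    have h_kr := (tendsto_sum_range_div_of_tendsto_sum_div_succ h_series).add
      (tendsto_const_div_atTop_nhds_zero_nat (z 0))
    rw [add_zero] at h_kr
    refine h_kr.congr fun n => ?_
    rw [sum_sub_distrib, sum_range_sub z]
    ring
  set A : ℕ → ℝ := fun n => (∑ k ∈ range n, g k) / n
  have hA_low : ∀ᶠ n in atTop, a ≤ A n := by
    filter_upwards [eventually_gt_atTop 0] with n hn
    rw [le_div_iff₀ (by exact_mod_cast hn)]
    simpa [mul_comm] using card_nsmul_le_sum (range n) g a fun k _ => hg_low k
  have hA_up : ∀ᶠ n in atTop, A n ≤ a + (n : ℝ)⁻¹ * ∑ k ∈ range n, σ / z k := by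
    filter_upwards [eventually_gt_atTop 0] with n hn
    have hn' : (n : ℝ) ≠ 0 := by exact_mod_cast hn.ne'
    calc (∑ k ∈ range n, g k) / n ≤ (∑ k ∈ range n, (a + σ / z k)) / n := by
          gcongr with k
          exact hg_up k
      _ = a + (n : ℝ)⁻¹ * ∑ k ∈ range n, σ / z k := by
          rw [sum_add_distrib, sum_const, card_range, nsmul_eq_mul]
          field_simp
  have hz_top : Tendsto z atTop atTop := by
    have h_half : ∀ᶠ n in atTop, a / 2 ≤ z n / n := by
      filter_upwards [h.eventually (eventually_ge_nhds (by linarith : -(a / 2) < 0)), hA_low]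
        with n h1 h2
      linarith
    refine tendsto_atTop_mono' atTop ?_
      ((tendsto_natCast_atTop_atTop (R := ℝ)).const_mul_atTop (half_pos ha))
    filter_upwards [h_half, eventually_gt_atTop 0] with n hn hn_pos
    rwa [le_div_iff₀ (by exact_mod_cast hn_pos)] at hn
  have hA : Tendsto A atTop (𝓝 a) := by
    have h_err :
        Tendsto (fun n : ℕ => (n : ℝ)⁻¹ * ∑ k ∈ range n, σ / z k) atTop (𝓝 0) := by
      simpa [div_eq_mul_inv] using ((tendsto_inv_atTop_zero.comp hz_top).const_mul σ).cesaro
    refine tendsto_of_tendsto_of_tendsto_of_le_of_le' tendsto_const_nhds ?_ hA_low hA_up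
    simpa using h_err.const_add a
  simpa only [zero_add] using (h.add hA).congr fun n => sub_add_cancel (z n / n) (A n)

lemma summable_div_natCast_add_one_sq (C : ℝ) : Summable fun n : ℕ => (C / (n + 1)) ^ 2 := by
  have h := (summable_nat_add_iff 1).2 (Real.summable_one_div_nat_pow.2 one_lt_two)
  refine (h.mul_left (C ^ 2)).congr fun n => ?_
  push_cast
  rw [div_pow, mul_one_div]

section MartingaleDifferences

variable {Ω : Type*} {m0 : MeasurableSpace Ω} {μ : Measure Ω}

lemma condExp_sub_condExp_ae_eq_zero {m : MeasurableSpace Ω} (hm : m ≤ m0)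
    [SigmaFinite (μ.trim hm)] (f : Ω → ℝ) : μ[f - μ[f|m]|m] =ᵐ[μ] 0 := by
  by_cases hf : Integrable f μ
  · filter_upwards [condExp_sub hf (integrable_condExp (m := m) (f := f)) m,
      condExp_condExp_of_le (f := f) le_rfl hm] with ω h1 h2
    simp [h1, h2]
  · simp [condExp_of_not_integrable hf]

lemma ae_abs_sub_condExp_le {m : MeasurableSpace Ω} {f : Ω → ℝ} {R : ℝ}
    (hf : ∀ᵐ ω ∂μ, |f ω| ≤ R) : ∀ᵐ ω ∂μ, |f ω - (μ[f|m]) ω| ≤ 2 * R := by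
  filter_upwards [hf, ae_bdd_abs_condExp_of_ae_bdd_abs (m := m) hf] with ω h1 h2
  linarith [abs_sub (f ω) ((μ[f|m]) ω)]

lemma integral_mul_eq_zero_of_condExp_eq_zero {m : MeasurableSpace Ω} (hm : m ≤ m0)
    [IsFiniteMeasure μ] {f g : Ω → ℝ} {C : ℝ} (hf : StronglyMeasurable[m] f)
    (hf_bdd : ∀ᵐ ω ∂μ, |f ω| ≤ C) (hg : Integrable g μ) (hg_cond : μ[g|m] =ᵐ[μ] 0) :
    ∫ ω, f ω * g ω ∂μ = 0 := by
  have hfg : μ[f * g|m] =ᵐ[μ] 0 := by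
    filter_upwards [condExp_stronglyMeasurable_mul_of_bound hm hf hg C hf_bdd, hg_cond]
      with ω h h0
    simp [h, h0]
  calc ∫ ω, f ω * g ω ∂μ = ∫ ω, (μ[f * g|m]) ω ∂μ := (integral_condExp hm).symm
    _ = 0 := by simp [integral_congr_ae hfg]

lemma eLpNorm_one_le_ofReal_one_add [IsProbabilityMeasure μ] {f : Ω → ℝ} {C : ℝ}
    (hf : Integrable f μ) (hf_sq : Integrable (fun ω => f ω ^ 2) μ)
    (hC : ∫ ω, f ω ^ 2 ∂μ ≤ C) :
    eLpNorm f 1 μ ≤ ENNReal.ofReal (1 + C) := by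
  have h_abs : ∫ ω, |f ω| ∂μ ≤ 1 + C :=
    calc ∫ ω, |f ω| ∂μ ≤ ∫ ω, (1 + f ω ^ 2) ∂μ :=
          integral_mono hf.abs ((integrable_const 1).add hf_sq) fun ω => by
            nlinarith [sq_abs (f ω), sq_nonneg (|f ω| - 1)]
      _ ≤ 1 + C := by
          rw [integral_add (integrable_const 1) hf_sq]
          simpa using hC
  rw [eLpNorm_one_eq_lintegral_enorm, ← ofReal_integral_norm_eq_lintegral_enorm hf]
  exact ENNReal.ofReal_le_ofReal h_abs

variable {ℱ : Filtration ℕ m0} {D : ℕ → Ω → ℝ} {c : ℕ → ℝ}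

lemma stronglyAdapted_sum_range (hD : ∀ n, StronglyMeasurable[ℱ (n + 1)] (D n)) :
    StronglyAdapted ℱ fun n ω => ∑ k ∈ range n, D k ω := fun _ =>
  Finset.stronglyMeasurable_fun_sum _ fun k hk =>
    (hD k).mono (ℱ.mono (Nat.succ_le_of_lt (mem_range.1 hk)))

lemma ae_abs_sum_range_le (hD_bdd : ∀ n, ∀ᵐ ω ∂μ, |D n ω| ≤ c n) :
    ∀ᵐ ω ∂μ, ∀ n, |∑ k ∈ range n, D k ω| ≤ ∑ k ∈ range n, c k := by
  filter_upwards [ae_all_iff.2 hD_bdd] with ω hω n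
  exact (abs_sum_le_sum_abs _ _).trans (sum_le_sum fun k _ => hω k)

lemma integrable_of_ae_abs_le [IsFiniteMeasure μ] {f : Ω → ℝ} {C : ℝ}
    (hf : AEStronglyMeasurable f μ) (hf_bdd : ∀ᵐ ω ∂μ, |f ω| ≤ C) : Integrable f μ :=
  .of_bound hf C (by simpa only [Real.norm_eq_abs] using hf_bdd)

lemma integrable_sq_of_ae_abs_le [IsFiniteMeasure μ] {f : Ω → ℝ} {C : ℝ}
    (hf : AEStronglyMeasurable f μ) (hf_bdd : ∀ᵐ ω ∂μ, |f ω| ≤ C) :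
    Integrable (fun ω => f ω ^ 2) μ :=
  .of_bound (hf.pow 2) (C ^ 2) (by
    filter_upwards [hf_bdd] with ω hω
    simpa only [norm_pow, Real.norm_eq_abs] using pow_le_pow_left₀ (abs_nonneg _) hω 2)

lemma martingale_sum_range [IsFiniteMeasure μ] (hD : ∀ n, StronglyMeasurable[ℱ (n + 1)] (D n))
    (hD_int : ∀ n, Integrable (D n) μ) (hD_cond : ∀ n, μ[D n|ℱ n] =ᵐ[μ] 0) :
    Martingale (fun n ω => ∑ k ∈ range n, D k ω) ℱ μ := by
  refine martingale_of_condExp_sub_eq_zero_nat (stronglyAdapted_sum_range hD)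
    (fun n => integrable_finsetSum _ fun k _ => hD_int k) fun n => ?_
  have h_incr : (fun ω => ∑ k ∈ range (n + 1), D k ω) - (fun ω => ∑ k ∈ range n, D k ω)
      = D n := by
    ext ω
    simp [sum_range_succ]
  rw [h_incr]
  exact hD_cond n

variable [IsProbabilityMeasure μ]

lemma integral_sq_sum_range_le (hD : ∀ n, StronglyMeasurable[ℱ (n + 1)] (D n))
    (hD_cond : ∀ n, μ[D n|ℱ n] =ᵐ[μ] 0) (hD_bdd : ∀ n, ∀ᵐ ω ∂μ, |D n ω| ≤ c n)
    (n : ℕ) :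
    ∫ ω, (∑ k ∈ range n, D k ω) ^ 2 ∂μ ≤ ∑ k ∈ range n, c k ^ 2 := by
  induction n with
  | zero => simp
  | succ n ih =>
    set S : Ω → ℝ := fun ω => ∑ k ∈ range n, D k ω
    have hS : StronglyMeasurable[ℱ n] S := stronglyAdapted_sum_range hD n
    have hS_bdd : ∀ᵐ ω ∂μ, |S ω| ≤ ∑ k ∈ range n, c k := by
      filter_upwards [ae_abs_sum_range_le hD_bdd] with ω hω using hω n
    have hD_meas : StronglyMeasurable (D n) := (hD n).mono (ℱ.le _)
    have hSm : StronglyMeasurable S := hS.mono (ℱ.le _)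
    have hD_int := integrable_of_ae_abs_le hD_meas.aestronglyMeasurable (hD_bdd n)
    have hS_sq_int := integrable_sq_of_ae_abs_le hSm.aestronglyMeasurable hS_bdd
    have hSD_int := hD_int.bdd_mul hSm.aestronglyMeasurable
      (by simpa only [Real.norm_eq_abs] using hS_bdd)
    have hD_sq_le : ∀ᵐ ω ∂μ, D n ω ^ 2 ≤ c n ^ 2 := by
      filter_upwards [hD_bdd n] with ω hω
      simpa only [sq_abs] using pow_le_pow_left₀ (abs_nonneg _) hω 2
    have hD_sq_int := integrable_sq_of_ae_abs_le hD_meas.aestronglyMeasurable (hD_bdd n)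
    have h_orth : ∫ ω, S ω * D n ω ∂μ = 0 :=
      integral_mul_eq_zero_of_condExp_eq_zero (ℱ.le n) hS hS_bdd hD_int (hD_cond n)
    calc ∫ ω, (∑ k ∈ range (n + 1), D k ω) ^ 2 ∂μ
        = ∫ ω, (S ω ^ 2 + 2 * (S ω * D n ω) + D n ω ^ 2) ∂μ := by
          congr 1 with ω
          simp only [S, sum_range_succ]
          ring
      _ = ∫ ω, S ω ^ 2 ∂μ + 2 * ∫ ω, S ω * D n ω ∂μ + ∫ ω, D n ω ^ 2 ∂μ := by
          rw [integral_add (f := fun ω => S ω ^ 2 + 2 * (S ω * D n ω))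
              (hS_sq_int.add (hSD_int.const_mul 2)) hD_sq_int,
            integral_add hS_sq_int (hSD_int.const_mul 2), integral_const_mul]
      _ ≤ ∑ k ∈ range n, c k ^ 2 + 2 * 0 + c n ^ 2 := by
          rw [h_orth]
          gcongr
          calc ∫ ω, D n ω ^ 2 ∂μ ≤ ∫ _, c n ^ 2 ∂μ :=
                integral_mono_ae hD_sq_int (integrable_const _) hD_sq_le
            _ = c n ^ 2 := by simp
      _ = ∑ k ∈ range (n + 1), c k ^ 2 := by rw [sum_range_succ]; ring

theorem ae_exists_tendsto_sum_range (hD : ∀ n, StronglyMeasurable[ℱ (n + 1)] (D n))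
    (hD_cond : ∀ n, μ[D n|ℱ n] =ᵐ[μ] 0) (hD_bdd : ∀ n, ∀ᵐ ω ∂μ, |D n ω| ≤ c n)
    (hc : Summable fun n => c n ^ 2) :
    ∀ᵐ ω ∂μ, ∃ s, Tendsto (fun n => ∑ k ∈ range n, D k ω) atTop (𝓝 s) := by
  have hD_int : ∀ n, Integrable (D n) μ := fun n =>
    integrable_of_ae_abs_le ((hD n).mono (ℱ.le _)).aestronglyMeasurable (hD_bdd n)
  have hS := martingale_sum_range hD hD_int hD_cond
  refine hS.submartingale.exists_ae_tendsto_of_bdd (R := (1 + ∑' n, c n ^ 2).toNNReal)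
    fun n => eLpNorm_one_le_ofReal_one_add (hS.integrable n) ?_ ?_
  · exact integrable_sq_of_ae_abs_le (hS.integrable n).aestronglyMeasurable
      (by filter_upwards [ae_abs_sum_range_le hD_bdd] with ω hω using hω n)
  · exact (integral_sq_sum_range_le hD hD_cond hD_bdd n).trans
      (hc.sum_le_tsum _ fun k _ => sq_nonneg (c k))

end MartingaleDifferences

theorem stmt_5_general
    {Ω : Type*} {m0 : MeasurableSpace Ω} (P : Measure Ω) [IsProbabilityMeasure P]
    (𝒢 : Filtration ℕ m0)
    (Z : ℕ → Ω → ℝ) (hZadapted : ∀ n, Measurable[𝒢 n] (Z n))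
    (B a σ : ℝ) (ha : 0 < a)
    (hbdd : ∀ n, ∀ᵐ ω ∂P, |Z (n + 1) ω - Z n ω| ≤ B)
    (hdrift : ∀ n, ∀ᵐ ω ∂P,
      a ≤ (P[(fun ω' => Z (n + 1) ω' - Z n ω') | 𝒢 n]) ω ∧
      (P[(fun ω' => Z (n + 1) ω' - Z n ω') | 𝒢 n]) ω ≤ a + σ / Z n ω) :
    ∀ᵐ ω ∂P, Tendsto (fun n : ℕ => Z n ω / (n : ℝ)) atTop (nhds a) := by
  set ΔZ : ℕ → Ω → ℝ := fun n ω => Z (n + 1) ω - Z n ω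
  set D : ℕ → Ω → ℝ := fun n => ((n : ℝ) + 1)⁻¹ • (ΔZ n - P[ΔZ n|𝒢 n])
  have hD_meas : ∀ n, StronglyMeasurable[𝒢 (n + 1)] (D n) := fun n =>
    have hΔZ := (hZadapted (n + 1)).sub ((hZadapted n).mono (𝒢.mono n.le_succ) le_rfl)
    have hg := stronglyMeasurable_condExp.mono (𝒢.mono n.le_succ)
    (hΔZ.stronglyMeasurable.sub hg).const_smul _
  have hD_cond : ∀ n, P[D n|𝒢 n] =ᵐ[P] 0 := fun n => by
    filter_upwards [condExp_smul (μ := P) ((n : ℝ) + 1)⁻¹ (ΔZ n - P[ΔZ n|𝒢 n]) (𝒢 n),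
      condExp_sub_condExp_ae_eq_zero (𝒢.le n) (ΔZ n)] with ω h1 h2
    simp [D, h1, h2]
  have hD_bdd : ∀ n, ∀ᵐ ω ∂P, |D n ω| ≤ 2 * B / (n + 1) := fun n => by
    filter_upwards [ae_abs_sub_condExp_le (m := 𝒢 n) (hbdd n)] with ω hω
    have hn : (0 : ℝ) < n + 1 := by positivity
    simp only [D, Pi.smul_apply, Pi.sub_apply, smul_eq_mul, abs_mul, abs_inv, abs_of_pos hn]
    rw [inv_mul_eq_div]
    gcongr
  filter_upwards [ae_exists_tendsto_sum_range hD_meas hD_cond hD_bdd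
      (summable_div_natCast_add_one_sq (2 * B)),
    ae_all_iff.2 hdrift] with ω ⟨s, hs⟩ hω
  refine tendsto_div_natCast_of_drift_bounds (s := s) ha (fun n => (hω n).1) (fun n => (hω n).2)
    (hs.congr fun n => sum_congr rfl fun k _ => ?_)
  simp [D, ΔZ, div_eq_inv_mul]

/-- Lemma on the strong law for processes with almost constant drift.
If `(Zₙ)` is adapted to `(𝒢ₙ)`, has bounded increments `|Z_{n+1} − Zₙ| ≤ B`, is positive,
`Z₀` is integrable, and the conditional drift satisfies
`a ≤ E[Z_{n+1} − Zₙ | 𝒢ₙ] ≤ a + σ/Zₙ` a.s. with `B > 0`, `a > 0`, `σ ≥ 0`,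
then `Zₙ/n → a` almost surely. -/
theorem stmt_5
    {Ω : Type*} {m0 : MeasurableSpace Ω} (P : Measure Ω) [IsProbabilityMeasure P]
    (𝒢 : Filtration ℕ m0)
    (Z : ℕ → Ω → ℝ) (hZadapted : ∀ n, Measurable[𝒢 n] (Z n))
    (hZ0int : Integrable (Z 0) P)
    (B a σ : ℝ) (hB : 0 < B) (ha : 0 < a) (hσ : 0 ≤ σ)
    (hbdd : ∀ n, ∀ᵐ ω ∂P, |Z (n + 1) ω - Z n ω| ≤ B)
    (hpos : ∀ n, ∀ᵐ ω ∂P, 0 < Z n ω)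
    (hdrift : ∀ n, ∀ᵐ ω ∂P,
      a ≤ (P[(fun ω' => Z (n + 1) ω' - Z n ω') | 𝒢 n]) ω ∧
      (P[(fun ω' => Z (n + 1) ω' - Z n ω') | 𝒢 n]) ω ≤ a + σ / Z n ω) :
    ∀ᵐ ω ∂P, Tendsto (fun n : ℕ => Z n ω / (n : ℝ)) atTop (nhds a) :=
  stmt_5_general P 𝒢 Z hZadapted B a σ ha hbdd hdrift
end

section
/- Suppose α₁ ≥ α₂ and α₁α₂ > β₁β₂. Then almost surely on the event {τ = ∞}, liminf_{n→∞} T_n/n > 0. -/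
/-!
Write `c = rβ₂ + α₁ - α₂`. Because `r` solves `β₂ r² + (α₁ - α₂) r = β₁`, the conditional drift of
`T = β₂ ζ₁ + c ζ₂` while both species are alive is `(β₂ λ₁ + c λ₂ + (α₂ - rβ₂) T) / W`, and
`α₂ - rβ₂ > 0` exactly when `α₁α₂ > β₁β₂`. As `W` is at most affine in `T`, the drift is bounded
below by some `ε > 0`. In the Doob decomposition of `T` the predictable part therefore grows at least
like `ε n` on survival, while the martingale part has bounded increments and so is `o(n)` almost
surely: `∑ ΔMₖ / (k + 1)` is an `L²`-bounded martingale, hence converges, and Kronecker's lemma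
applies.
-/

open MeasureTheory Filter Finset Topology
open scoped ENNReal

theorem tendsto_sum_range_div_zero_of_tendsto_sum_range_div_succ {s : ℕ → ℝ} {l : ℝ}
    (h : Tendsto (fun n => ∑ k ∈ range n, s k / (k + 1)) atTop (𝓝 l)) :
    Tendsto (fun n : ℕ => (∑ k ∈ range n, s k) / n) atTop (𝓝 0) := by
  set b : ℕ → ℝ := fun n => ∑ k ∈ range n, s k / (k + 1)
  have abel : ∀ n : ℕ, ∑ k ∈ range n, s k = n * b n - ∑ k ∈ range n, b k := by
    intro n
    induction n with
    | zero => simp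
    | succ n ih =>
      simp only [sum_range_succ, ih, b]
      push_cast
      field_simp
      ring
  have hlim : Tendsto (fun n : ℕ => b n - (n : ℝ)⁻¹ * ∑ k ∈ range n, b k) atTop (𝓝 (l - l)) :=
    h.sub h.cesaro
  rw [sub_self] at hlim
  refine hlim.congr' ?_
  filter_upwards [eventually_ne_atTop 0] with n hn
  rw [abel n]
  field_simp

theorem sum_range_inv_succ_sq_le_two (n : ℕ) : ∑ k ∈ range n, ((k + 1 : ℝ) ^ 2)⁻¹ ≤ 2 := by
  have h := sum_Ioo_inv_sq_le (α := ℝ) 0 (n + 1)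
  rw [← Ico_add_one_left_eq_Ioo, zero_add, sum_Ico_eq_sum_range] at h
  simpa [add_comm] using h

theorem abs_sub_le_sum_of_abs_sub_succ_le {u c : ℕ → ℝ} (hu : ∀ k, |u (k + 1) - u k| ≤ c k)
    (n : ℕ) : |u n - u 0| ≤ ∑ k ∈ range n, c k := by
  calc |u n - u 0| = dist (u 0) (u n) := by rw [Real.dist_eq, abs_sub_comm]
    _ ≤ ∑ k ∈ range n, dist (u k) (u (k + 1)) := dist_le_range_sum_dist u n
    _ ≤ ∑ k ∈ range n, c k := sum_le_sum fun k _ => by rw [Real.dist_eq, abs_sub_comm]; exact hu k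

theorem le_liminf_of_tendsto_of_eventually_le {u v : ℕ → ℝ} {a : ℝ} (hv : Tendsto v atTop (𝓝 a))
    (hvu : ∀ᶠ n in atTop, v n ≤ u n) (hu : IsBoundedUnder (· ≤ ·) atTop u) :
    a ≤ liminf u atTop :=
  hv.liminf_eq ▸ liminf_le_liminf hvu hv.isBoundedUnder_ge hu.isCoboundedUnder_ge

namespace MeasureTheory

variable {Ω : Type*} {m0 : MeasurableSpace Ω} {P : Measure Ω} {ℱ : Filtration ℕ m0}
  {M : ℕ → Ω → ℝ}

theorem Martingale.condExp_sub_succ_eq_zero [IsFiniteMeasure P] (hM : Martingale M ℱ P) (n : ℕ) :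
    P[M (n + 1) - M n | ℱ n] =ᵐ[P] 0 := by
  refine (condExp_sub (hM.integrable _) (hM.integrable _) _).trans ?_
  filter_upwards [hM.condExp_ae_eq n.le_succ] with ω hω
  simp [hω, condExp_of_stronglyMeasurable (ℱ.le n) (hM.stronglyMeasurable n) (hM.integrable n)]

theorem Martingale.sum_const_smul_sub [IsFiniteMeasure P] (hM : Martingale M ℱ P) (a : ℕ → ℝ) :
    Martingale (fun n => ∑ k ∈ range n, a k • (M (k + 1) - M k)) ℱ P := by
  refine martingale_of_condExp_sub_eq_zero_nat (fun n => ?_) (fun n => ?_) fun n => ?_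
  · refine Finset.stronglyMeasurable_sum _ fun k hk => ?_
    have hk : k + 1 ≤ n := mem_range.1 hk
    exact (((hM.stronglyMeasurable _).mono (ℱ.mono hk)).sub
      ((hM.stronglyMeasurable _).mono (ℱ.mono (by omega)))).const_smul (a k)
  · exact integrable_finsetSum' _ fun k _ => ((hM.integrable _).sub (hM.integrable _)).smul (a k)
  · simp only [sum_range_succ_sub_sum]
    filter_upwards [condExp_smul (a n) (M (n + 1) - M n) (ℱ n), hM.condExp_sub_succ_eq_zero n]
      with ω h₁ h₂
    simp [h₁, h₂]

theorem memLp_of_abs_sub_succ_le [IsFiniteMeasure P] {X : ℕ → Ω → ℝ}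
    (hX : ∀ n, AEStronglyMeasurable (X n) P) (h0 : X 0 = 0) {c : ℕ → ℝ}
    (hc : ∀ k, ∀ᵐ ω ∂P, |X (k + 1) ω - X k ω| ≤ c k) (p : ℝ≥0∞) (n : ℕ) : MemLp (X n) p P := by
  refine MemLp.of_bound (hX n) (∑ k ∈ range n, c k) ?_
  filter_upwards [ae_all_iff.2 hc] with ω hω
  simpa [h0] using abs_sub_le_sum_of_abs_sub_succ_le (u := fun k => X k ω) hω n

theorem Martingale.integral_sq_le_sum_sq [IsProbabilityMeasure P] (hM : Martingale M ℱ P)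
    (h0 : M 0 = 0) {c : ℕ → ℝ} (hc : ∀ k, ∀ᵐ ω ∂P, |M (k + 1) ω - M k ω| ≤ c k) (n : ℕ) :
    ∫ ω, M n ω ^ 2 ∂P ≤ ∑ k ∈ range n, c k ^ 2 := by
  have memLp_M : ∀ n, MemLp (M n) 2 P :=
    memLp_of_abs_sub_succ_le (fun n => (hM.integrable n).aestronglyMeasurable) h0 hc 2
  have memLp_Δ : ∀ n, MemLp (M (n + 1) - M n) 2 P := fun n =>
    MemLp.of_bound ((hM.integrable _).sub (hM.integrable n)).aestronglyMeasurable _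
      (by simpa using hc n)
  have cross : ∀ n, ∫ ω, M n ω * (M (n + 1) ω - M n ω) ∂P = 0 := by
    intro n
    have hint : Integrable (M n * (M (n + 1) - M n)) P := (memLp_M n).integrable_mul (memLp_Δ n)
    calc ∫ ω, M n ω * (M (n + 1) ω - M n ω) ∂P
        = ∫ ω, P[M n * (M (n + 1) - M n) | ℱ n] ω ∂P := (integral_condExp (ℱ.le n)).symm
      _ = 0 := integral_eq_zero_of_ae ?_
    filter_upwards [condExp_mul_of_stronglyMeasurable_left (hM.stronglyMeasurable n) hint
      ((hM.integrable _).sub (hM.integrable n)), hM.condExp_sub_succ_eq_zero n] with ω h₁ h₂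
    simp [h₁, h₂]
  induction n with
  | zero => simp [h0]
  | succ n ih =>
    have hΔ : ∫ ω, (M (n + 1) ω - M n ω) ^ 2 ∂P ≤ c n ^ 2 := by
      refine (integral_mono_ae (memLp_Δ n).integrable_sq (integrable_const (c n ^ 2)) ?_).trans
        (by simp)
      filter_upwards [hc n] with ω hω
      exact sq_le_sq' (abs_le.1 hω).1 (abs_le.1 hω).2
    have hexpand : ∫ ω, M (n + 1) ω ^ 2 ∂P = ∫ ω, M n ω ^ 2 ∂P
        + 2 * ∫ ω, M n ω * (M (n + 1) ω - M n ω) ∂P + ∫ ω, (M (n + 1) ω - M n ω) ^ 2 ∂P := by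
      have hcross := ((memLp_M n).integrable_mul (memLp_Δ n)).const_mul 2
      calc ∫ ω, M (n + 1) ω ^ 2 ∂P = ∫ ω, (M n ω ^ 2 + 2 * (M n ω * (M (n + 1) ω - M n ω))
            + (M (n + 1) ω - M n ω) ^ 2) ∂P := by congr 1 with ω; ring
        _ = _ := by
          rw [integral_add, integral_add, integral_const_mul]
          exacts [(memLp_M n).integrable_sq, hcross, (memLp_M n).integrable_sq.add hcross,
            (memLp_Δ n).integrable_sq]
    rw [hexpand, cross, sum_range_succ]
    linarith

theorem Martingale.ae_tendsto_div_atTop_zero [IsProbabilityMeasure P] (hM : Martingale M ℱ P)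
    {C : ℝ} (hbdd : ∀ᵐ ω ∂P, ∀ n, |M (n + 1) ω - M n ω| ≤ C) :
    ∀ᵐ ω ∂P, Tendsto (fun n : ℕ => M n ω / n) atTop (𝓝 0) := by
  set N : ℕ → Ω → ℝ := fun n => ∑ k ∈ range n, ((k : ℝ) + 1)⁻¹ • (M (k + 1) - M k)
  have hN : Martingale N ℱ P := hM.sum_const_smul_sub _
  have hN0 : N 0 = 0 := by simp [N]
  have hN_inc : ∀ k, ∀ᵐ ω ∂P, |N (k + 1) ω - N k ω| ≤ ((k : ℝ) + 1)⁻¹ * C := by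
    intro k
    have hN_succ : N (k + 1) - N k = ((k : ℝ) + 1)⁻¹ • (M (k + 1) - M k) :=
      sum_range_succ_sub_sum _
    filter_upwards [hbdd] with ω hω
    rw [← Pi.sub_apply, hN_succ, Pi.smul_apply, smul_eq_mul, abs_mul, abs_inv,
      abs_of_pos (by positivity)]
    exact mul_le_mul_of_nonneg_left (hω k) (by positivity)
  have hN_sq : ∀ n, ∫ ω, N n ω ^ 2 ∂P ≤ 2 * C ^ 2 := by
    intro n
    calc ∫ ω, N n ω ^ 2 ∂P ≤ ∑ k ∈ range n, (((k : ℝ) + 1)⁻¹ * C) ^ 2 :=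
          hN.integral_sq_le_sum_sq hN0 hN_inc n
      _ = C ^ 2 * ∑ k ∈ range n, (((k : ℝ) + 1) ^ 2)⁻¹ := by
          rw [mul_sum]; congr 1 with k; rw [mul_pow, inv_pow, mul_comm]
      _ ≤ C ^ 2 * 2 := by gcongr; exact sum_range_inv_succ_sq_le_two n
      _ = 2 * C ^ 2 := mul_comm _ _
  -- `|x| ≤ (x ^ 2 + 1) / 2` turns the `L²` bound into an `L¹` bound.
  have hN_L1 : ∀ n, eLpNorm (N n) 1 P ≤ (C ^ 2 + 1 / 2).toNNReal := by
    intro n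
    have hsq : Integrable (fun ω => N n ω ^ 2) P :=
      (memLp_of_abs_sub_succ_le (fun n => (hN.integrable n).1) hN0 hN_inc 2 n).integrable_sq
    rw [eLpNorm_one_eq_lintegral_enorm, ← ofReal_integral_norm_eq_lintegral_enorm (hN.integrable n)]
    refine ENNReal.ofReal_le_ofReal ?_
    calc ∫ ω, ‖N n ω‖ ∂P ≤ ∫ ω, (N n ω ^ 2 + 1) / 2 ∂P := by
          refine integral_mono (hN.integrable n).norm ((hsq.add (integrable_const 1)).div_const 2)
            fun ω => ?_
          nlinarith [sq_nonneg (|N n ω| - 1), sq_abs (N n ω), Real.norm_eq_abs (N n ω)]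
      _ = (∫ ω, N n ω ^ 2 ∂P + 1) / 2 := by
          rw [integral_div, integral_add hsq (integrable_const 1)]; simp
      _ ≤ C ^ 2 + 1 / 2 := by linarith [hN_sq n]
  filter_upwards [hN.submartingale.exists_ae_tendsto_of_bdd hN_L1] with ω ⟨l, hl⟩
  have hsum := tendsto_sum_range_div_zero_of_tendsto_sum_range_div_succ
    (s := fun k => M (k + 1) ω - M k ω) (l := l) (by simpa [N, div_eq_inv_mul] using hl)
  have hlim := hsum.add (tendsto_const_div_atTop_nhds_zero_nat (M 0 ω))
  rw [add_zero] at hlim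
  refine hlim.congr fun n => ?_
  rw [sum_range_sub (fun k => M k ω), ← add_div, sub_add_cancel]

theorem ae_le_liminf_div_of_le_condExp_sub [IsProbabilityMeasure P] {X : ℕ → Ω → ℝ}
    (hX : StronglyAdapted ℱ X) {C ε : ℝ} (hbdd : ∀ᵐ ω ∂P, ∀ n, |X (n + 1) ω - X n ω| ≤ C)
    {p : ℕ → Ω → Prop} (hdrift : ∀ n, ∀ᵐ ω ∂P, p n ω → ε ≤ P[X (n + 1) - X n | ℱ n] ω) :
    ∀ᵐ ω ∂P, (∀ n, p n ω) → ε ≤ liminf (fun n : ℕ => X n ω / n) atTop := by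
  -- `X 0` need not be integrable, so it is `X - X 0` that gets a Doob decomposition.
  set Y : ℕ → Ω → ℝ := fun n => X n - X 0
  have hY_sub : ∀ n, Y (n + 1) - Y n = X (n + 1) - X n := fun n => sub_sub_sub_cancel_right _ _ _
  have hY : StronglyAdapted ℱ Y := fun n => (hX n).sub ((hX 0).mono (ℱ.mono n.zero_le))
  have hY_bdd : ∀ᵐ ω ∂P, ∀ n, ‖Y (n + 1) ω - Y n ω‖ ≤ C := by
    filter_upwards [hbdd] with ω hω n
    rw [← Pi.sub_apply, hY_sub, Real.norm_eq_abs]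
    exact hω n
  have hY_int : ∀ n, Integrable (Y n) P := fun n =>
    (memLp_of_abs_sub_succ_le (fun n => ((hY n).mono (ℱ.le n)).aestronglyMeasurable)
      (by simp [Y]) (fun k => by filter_upwards [hY_bdd] with ω hω; exact hω k) 1 n).integrable
      le_rfl
  set Mg := martingalePart Y ℱ P
  have hMg : Martingale Mg ℱ P := martingale_martingalePart hY hY_int
  have hslln := hMg.ae_tendsto_div_atTop_zero (C := 2 * C)
    (by simpa using martingalePart_bdd_difference ℱ hY_bdd)
  filter_upwards [hslln, hbdd, ae_all_iff.2 hdrift] with ω hω hbω hdω hp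
  have hX_ge : ∀ n : ℕ, X 0 ω + Mg n ω + n * ε ≤ X n ω := by
    intro n
    have hpred : n * ε ≤ predictablePart Y ℱ P n ω := by
      simp only [predictablePart, Finset.sum_apply, hY_sub]
      simpa using sum_le_sum (s := range n) fun k _ => hdω k (hp k)
    have hdecomp : Mg n ω + predictablePart Y ℱ P n ω = X n ω - X 0 ω :=
      congr_fun (congr_fun (martingalePart_add_predictablePart ℱ P Y) n) ω
    linarith
  refine le_liminf_of_tendsto_of_eventually_le (v := fun n => ε + (X 0 ω + Mg n ω) / n) ?_ ?_ ?_
  · simpa [add_div] using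
      tendsto_const_nhds.add ((tendsto_const_div_atTop_nhds_zero_nat (X 0 ω)).add hω)
  · filter_upwards [eventually_ne_atTop 0] with n hn
    rw [le_div_iff₀ (by positivity), add_mul, div_mul_cancel₀ _ (by positivity)]
    linarith [hX_ge n]
  · refine ((tendsto_const_div_atTop_nhds_zero_nat (X 0 ω)).add_const C).isBoundedUnder_le.mono_le ?_
    filter_upwards [eventually_ne_atTop 0] with n hn
    have hXn := abs_sub_le_sum_of_abs_sub_succ_le (u := fun k => X k ω) hbω n
    rw [sum_const, card_range, nsmul_eq_mul] at hXn
    rw [div_add' _ _ _ (by positivity), div_le_div_iff_of_pos_right (by positivity)]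
    linarith [le_abs_self (X n ω - X 0 ω)]

end MeasureTheory

theorem linear_step_sub_eq {x y x' y' : ℕ} (a b : ℝ)
    (h : (x' = x + 1 ∧ y' = y) ∨ (x' = x ∧ y' = y + 1) ∨ (x' + 1 = x ∧ y' = y) ∨
      (x' = x ∧ y' + 1 = y)) :
    (a * x' + b * y') - (a * x + b * y) =
      a * ((if x' = x + 1 ∧ y' = y then 1 else 0) - (if x' + 1 = x ∧ y' = y then 1 else 0)) +
      b * ((if x' = x ∧ y' = y + 1 then 1 else 0) - (if x' = x ∧ y' + 1 = y then 1 else 0)) := by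
  rcases h with ⟨rfl, rfl⟩ | ⟨rfl, rfl⟩ | ⟨rfl, rfl⟩ | ⟨rfl, rfl⟩ <;> simp [add_assoc] <;> ring

theorem abs_linear_step_sub_le {x y x' y' : ℕ} (a b : ℝ)
    (h : (x' = x + 1 ∧ y' = y) ∨ (x' = x ∧ y' = y + 1) ∨ (x' + 1 = x ∧ y' = y) ∨
      (x' = x ∧ y' + 1 = y)) :
    |(a * x' + b * y') - (a * x + b * y)| ≤ max |a| |b| := by
  rcases h with ⟨rfl, rfl⟩ | ⟨rfl, rfl⟩ | ⟨rfl, rfl⟩ | ⟨rfl, rfl⟩ <;> push_cast <;> ring_nf <;> simp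

theorem condExp_sub_eq_of_nearest_neighbour_step {Ω : Type*} {m m0 : MeasurableSpace Ω}
    {P : Measure Ω} [IsFiniteMeasure P] {ζ₁ ζ₂ : ℕ → Ω → ℕ}
    (hζ₁ : ∀ n, Measurable (ζ₁ n)) (hζ₂ : ∀ n, Measurable (ζ₂ n)) {T : ℕ → Ω → ℝ} {a b : ℝ}
    (hT : ∀ n ω, T n ω = a * ζ₁ n ω + b * ζ₂ n ω) {n : ℕ}
    (hstep : ∀ᵐ ω ∂P,
      (ζ₁ (n + 1) ω = ζ₁ n ω + 1 ∧ ζ₂ (n + 1) ω = ζ₂ n ω) ∨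
      (ζ₁ (n + 1) ω = ζ₁ n ω ∧ ζ₂ (n + 1) ω = ζ₂ n ω + 1) ∨
      (ζ₁ (n + 1) ω + 1 = ζ₁ n ω ∧ ζ₂ (n + 1) ω = ζ₂ n ω) ∨
      (ζ₁ (n + 1) ω = ζ₁ n ω ∧ ζ₂ (n + 1) ω + 1 = ζ₂ n ω))
    {pR pU pL pD : Ω → ℝ}
    (hR : P[({ω | ζ₁ (n + 1) ω = ζ₁ n ω + 1 ∧ ζ₂ (n + 1) ω = ζ₂ n ω} : Set Ω).indicator
      (fun _ => (1 : ℝ)) | m] =ᵐ[P] pR)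
    (hU : P[({ω | ζ₁ (n + 1) ω = ζ₁ n ω ∧ ζ₂ (n + 1) ω = ζ₂ n ω + 1} : Set Ω).indicator
      (fun _ => (1 : ℝ)) | m] =ᵐ[P] pU)
    (hL : P[({ω | ζ₁ (n + 1) ω + 1 = ζ₁ n ω ∧ ζ₂ (n + 1) ω = ζ₂ n ω} : Set Ω).indicator
      (fun _ => (1 : ℝ)) | m] =ᵐ[P] pL)
    (hD : P[({ω | ζ₁ (n + 1) ω = ζ₁ n ω ∧ ζ₂ (n + 1) ω + 1 = ζ₂ n ω} : Set Ω).indicator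
      (fun _ => (1 : ℝ)) | m] =ᵐ[P] pD) :
    P[T (n + 1) - T n | m] =ᵐ[P] a • (pR - pL) + b • (pU - pD) := by
  set R : Set Ω := {ω | ζ₁ (n + 1) ω = ζ₁ n ω + 1 ∧ ζ₂ (n + 1) ω = ζ₂ n ω}
  set U : Set Ω := {ω | ζ₁ (n + 1) ω = ζ₁ n ω ∧ ζ₂ (n + 1) ω = ζ₂ n ω + 1}
  set L : Set Ω := {ω | ζ₁ (n + 1) ω + 1 = ζ₁ n ω ∧ ζ₂ (n + 1) ω = ζ₂ n ω}
  set D : Set Ω := {ω | ζ₁ (n + 1) ω = ζ₁ n ω ∧ ζ₂ (n + 1) ω + 1 = ζ₂ n ω}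
  have iR : Integrable (R.indicator fun _ => (1 : ℝ)) P :=
    (integrable_const 1).indicator (by measurability)
  have iU : Integrable (U.indicator fun _ => (1 : ℝ)) P :=
    (integrable_const 1).indicator (by measurability)
  have iL : Integrable (L.indicator fun _ => (1 : ℝ)) P :=
    (integrable_const 1).indicator (by measurability)
  have iD : Integrable (D.indicator fun _ => (1 : ℝ)) P :=
    (integrable_const 1).indicator (by measurability)
  have hlin : T (n + 1) - T n =ᵐ[P] a • (R.indicator (fun _ => (1 : ℝ)) - L.indicator fun _ => 1)
      + b • (U.indicator (fun _ => (1 : ℝ)) - D.indicator fun _ => 1) := by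
    filter_upwards [hstep] with ω h
    simp only [Pi.sub_apply, Pi.add_apply, Pi.smul_apply, smul_eq_mul, hT, Set.indicator_apply,
      R, U, L, D, Set.mem_ofPred_eq]
    exact linear_step_sub_eq a b h
  refine (condExp_congr_ae hlin).trans ?_
  refine (condExp_add ((iR.sub iL).smul a) ((iU.sub iD).smul b) m).trans ?_
  refine ((condExp_smul a _ m).add (condExp_smul b _ m)).trans ?_
  exact (((condExp_sub iR iL m).trans (hR.sub hL)).const_smul a).add
    (((condExp_sub iU iD m).trans (hU.sub hD)).const_smul b)

theorem positive_root_spec {α₁ α₂ β₁ β₂ r : ℝ} (hβ₁ : 0 < β₁) (hβ₂ : 0 < β₂) (hα₁ : 0 ≤ α₁)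
    (hab : β₁ * β₂ < α₁ * α₂)
    (hr : r = (-(α₁ - α₂) + Real.sqrt ((α₁ - α₂) ^ 2 + 4 * β₁ * β₂)) / (2 * β₂)) :
    0 < r * β₂ + α₁ - α₂ ∧ r * β₂ < α₂ ∧ (r * β₂ + α₁ - α₂) * (r * β₂) = β₁ * β₂ := by
  set s := Real.sqrt ((α₁ - α₂) ^ 2 + 4 * β₁ * β₂)
  have hs : s ^ 2 = (α₁ - α₂) ^ 2 + 4 * β₁ * β₂ := Real.sq_sqrt (by positivity)
  have hrβ : r * β₂ = (s - (α₁ - α₂)) / 2 := by rw [hr]; field_simp; ring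
  have hs_gt : |α₁ - α₂| < s := by
    refine abs_lt_of_sq_lt_sq ?_ (Real.sqrt_nonneg _)
    rw [hs]
    nlinarith [mul_pos hβ₁ hβ₂]
  rw [hrβ]
  refine ⟨by linarith [neg_abs_le (α₁ - α₂)], ?_, by linear_combination hs / 4⟩
  have hsum : 0 < α₁ + α₂ := by nlinarith [mul_pos hβ₁ hβ₂]
  have hs_lt : s < α₁ + α₂ := (Real.sqrt_lt' hsum).2 (by nlinarith)
  linarith

theorem exists_pos_le_drift {l₁ l₂ α₁ α₂ β₁ β₂ c d : ℝ} (hl₁ : 0 < l₁) (hl₂ : 0 < l₂)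
    (hβ₁ : 0 < β₁) (hβ₂ : 0 < β₂) (hα₁ : 0 ≤ α₁) (hα₂ : 0 ≤ α₂) (hc : 0 < c) (hd : d < α₂)
    (hcd : c + α₂ = α₁ + d) (hprod : c * d = β₁ * β₂) :
    ∃ ε > 0, ∀ x y : ℝ, 0 ≤ x → 0 ≤ y →
      ε ≤ (β₂ * (l₁ + α₁ * x - β₁ * y) + c * (l₂ + α₂ * y - β₂ * x)) /
        (l₁ + α₁ * x + (l₂ + α₂ * y) + β₁ * y + β₂ * x) := by
  have hδ : 0 < α₂ - d := sub_pos.2 hd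
  set ε := min ((β₂ * l₁ + c * l₂) / (l₁ + l₂))
    (min ((α₂ - d) * β₂ / (α₁ + β₂)) ((α₂ - d) * c / (α₂ + β₁)))
  refine ⟨ε, by positivity, fun x y hx hy => ?_⟩
  have h₁ : ε * (l₁ + l₂) ≤ β₂ * l₁ + c * l₂ :=
    (le_div_iff₀ (by positivity)).1 (min_le_left _ _)
  have h₂ : ε * (α₁ + β₂) ≤ (α₂ - d) * β₂ :=
    (le_div_iff₀ (by positivity)).1 ((min_le_right _ _).trans (min_le_left _ _))
  have h₃ : ε * (α₂ + β₁) ≤ (α₂ - d) * c :=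
    (le_div_iff₀ (by positivity)).1 ((min_le_right _ _).trans (min_le_right _ _))
  have hnum : β₂ * (l₁ + α₁ * x - β₁ * y) + c * (l₂ + α₂ * y - β₂ * x)
      = β₂ * l₁ + c * l₂ + (α₂ - d) * β₂ * x + (α₂ - d) * c * y := by
    linear_combination (-β₂ * x) * hcd + y * hprod
  rw [le_div_iff₀ (by positivity), hnum]
  nlinarith [mul_le_mul_of_nonneg_right h₂ hx, mul_le_mul_of_nonneg_right h₃ hy]

theorem stmt_7_general
    {Ω : Type*} {m0 : MeasurableSpace Ω} (P : Measure Ω) [IsProbabilityMeasure P]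
    (ℱ : Filtration ℕ m0)
    (l₁ l₂ β₁ β₂ α₁ α₂ : ℝ)
    (hl₁ : 0 < l₁) (hl₂ : 0 < l₂) (hβ₁ : 0 < β₁) (hβ₂ : 0 < β₂)
    (hα₁ : 0 ≤ α₁) (hα₂ : 0 ≤ α₂)
    (ζ₁ ζ₂ : ℕ → Ω → ℕ)
    (hζ₁meas : ∀ n, Measurable[ℱ n] (ζ₁ n)) (hζ₂meas : ∀ n, Measurable[ℱ n] (ζ₂ n))
    (hstep : ∀ n, ∀ᵐ ω ∂P,
      (ζ₁ (n + 1) ω = ζ₁ n ω + 1 ∧ ζ₂ (n + 1) ω = ζ₂ n ω) ∨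
      (ζ₁ (n + 1) ω = ζ₁ n ω ∧ ζ₂ (n + 1) ω = ζ₂ n ω + 1) ∨
      (ζ₁ (n + 1) ω + 1 = ζ₁ n ω ∧ ζ₂ (n + 1) ω = ζ₂ n ω) ∨
      (ζ₁ (n + 1) ω = ζ₁ n ω ∧ ζ₂ (n + 1) ω + 1 = ζ₂ n ω))
    (W : ℕ → Ω → ℝ)
    (hW : ∀ n ω, W n ω =
      (l₁ + α₁ * (ζ₁ n ω : ℝ)) + (l₂ + α₂ * (ζ₂ n ω : ℝ)) +
      (if 1 ≤ ζ₁ n ω then β₁ * (ζ₂ n ω : ℝ) else 0) +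
      (if 1 ≤ ζ₂ n ω then β₂ * (ζ₁ n ω : ℝ) else 0))
    (hright : ∀ n,
      P[({ω' | ζ₁ (n + 1) ω' = ζ₁ n ω' + 1 ∧ ζ₂ (n + 1) ω' = ζ₂ n ω'} : Set Ω).indicator
          (fun _ => (1 : ℝ)) | ℱ n]
        =ᵐ[P] fun ω => (l₁ + α₁ * (ζ₁ n ω : ℝ)) / W n ω)
    (hupp : ∀ n,
      P[({ω' | ζ₁ (n + 1) ω' = ζ₁ n ω' ∧ ζ₂ (n + 1) ω' = ζ₂ n ω' + 1} : Set Ω).indicator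
          (fun _ => (1 : ℝ)) | ℱ n]
        =ᵐ[P] fun ω => (l₂ + α₂ * (ζ₂ n ω : ℝ)) / W n ω)
    (hleft : ∀ n,
      P[({ω' | ζ₁ (n + 1) ω' + 1 = ζ₁ n ω' ∧ ζ₂ (n + 1) ω' = ζ₂ n ω'} : Set Ω).indicator
          (fun _ => (1 : ℝ)) | ℱ n]
        =ᵐ[P] fun ω => (if 1 ≤ ζ₁ n ω then β₁ * (ζ₂ n ω : ℝ) else 0) / W n ω)
    (hdownp : ∀ n,
      P[({ω' | ζ₁ (n + 1) ω' = ζ₁ n ω' ∧ ζ₂ (n + 1) ω' + 1 = ζ₂ n ω'} : Set Ω).indicator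
          (fun _ => (1 : ℝ)) | ℱ n]
        =ᵐ[P] fun ω => (if 1 ≤ ζ₂ n ω then β₂ * (ζ₁ n ω : ℝ) else 0) / W n ω)
    (hab : β₁ * β₂ < α₁ * α₂)
    (r : ℝ) (hr : r = (-(α₁ - α₂) + Real.sqrt ((α₁ - α₂) ^ 2 + 4 * β₁ * β₂)) / (2 * β₂))
    (T : ℕ → Ω → ℝ)
    (hT : ∀ n ω, T n ω = β₂ * (ζ₁ n ω : ℝ) + (r * β₂ + α₁ - α₂) * (ζ₂ n ω : ℝ)) :
    ∀ᵐ ω ∂P, (∀ n, ζ₁ n ω ≠ 0 ∧ ζ₂ n ω ≠ 0) →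
      0 < Filter.liminf (fun n : ℕ => T n ω / (n : ℝ)) atTop := by
  obtain ⟨hc, hd, hprod⟩ := positive_root_spec hβ₁ hβ₂ hα₁ hab hr
  obtain ⟨ε, hε, hdrift⟩ :=
    exists_pos_le_drift hl₁ hl₂ hβ₁ hβ₂ hα₁ hα₂ hc hd (by ring) hprod
  have hT_adapted : StronglyAdapted ℱ T := fun n => by
    rw [show T n = _ from funext (hT n)]
    exact (by fun_prop : Measurable[ℱ n] _).stronglyMeasurable
  have hT_bdd : ∀ᵐ ω ∂P, ∀ n, |T (n + 1) ω - T n ω| ≤ max |β₂| |r * β₂ + α₁ - α₂| :=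
    ae_all_iff.2 fun n => (hstep n).mono fun ω h => by
      rw [hT, hT]; exact abs_linear_step_sub_le _ _ h
  have hT_drift : ∀ n, ∀ᵐ ω ∂P, (ζ₁ n ω ≠ 0 ∧ ζ₂ n ω ≠ 0) → ε ≤ P[T (n + 1) - T n | ℱ n] ω := by
    intro n
    filter_upwards [condExp_sub_eq_of_nearest_neighbour_step
      (fun n => (hζ₁meas n).mono (ℱ.le n) le_rfl) (fun n => (hζ₂meas n).mono (ℱ.le n) le_rfl)
      hT (hstep n) (hright n) (hupp n) (hleft n) (hdownp n)] with ω hω ⟨h₁, h₂⟩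
    rw [hω]
    simp only [Pi.add_apply, Pi.sub_apply, Pi.smul_apply, smul_eq_mul, hW,
      if_pos (Nat.one_le_iff_ne_zero.2 h₁), if_pos (Nat.one_le_iff_ne_zero.2 h₂)]
    refine (hdrift (ζ₁ n ω) (ζ₂ n ω) (Nat.cast_nonneg _) (Nat.cast_nonneg _)).trans_eq ?_
    ring
  filter_upwards [ae_le_liminf_div_of_le_condExp_sub hT_adapted hT_bdd hT_drift] with ω hω hsurv
  exact hε.trans_le (hω hsurv)

/-- Corollary on `Tₙ`. For the discrete-time competition process with
linear interaction, if `α₁ ≥ α₂` and `α₁α₂ > β₁β₂`, then almost surely on the event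
`{τ = ∞}`, `liminf_{n→∞} Tₙ/n > 0`, where `Tₙ = β₂ζ₁(n) + (rβ₂ + α₁ − α₂)ζ₂(n)` and
`r` is the positive root of `β₂r² + (α₁ − α₂)r − β₁ = 0`. -/
theorem stmt_7
    {Ω : Type*} {m0 : MeasurableSpace Ω} (P : Measure Ω) [IsProbabilityMeasure P]
    (ℱ : Filtration ℕ m0)
    (l₁ l₂ β₁ β₂ α₁ α₂ : ℝ)
    (hl₁ : 0 < l₁) (hl₂ : 0 < l₂) (hβ₁ : 0 < β₁) (hβ₂ : 0 < β₂)
    (hα₁ : 0 ≤ α₁) (hα₂ : 0 ≤ α₂)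
    (ζ₁ ζ₂ : ℕ → Ω → ℕ)
    (hζ₁meas : ∀ n, Measurable[ℱ n] (ζ₁ n)) (hζ₂meas : ∀ n, Measurable[ℱ n] (ζ₂ n))
    (x₀ y₀ : ℕ) (hinit : ∀ ω, ζ₁ 0 ω = x₀ ∧ ζ₂ 0 ω = y₀)
    (hstep : ∀ n, ∀ᵐ ω ∂P,
      (ζ₁ (n + 1) ω = ζ₁ n ω + 1 ∧ ζ₂ (n + 1) ω = ζ₂ n ω) ∨
      (ζ₁ (n + 1) ω = ζ₁ n ω ∧ ζ₂ (n + 1) ω = ζ₂ n ω + 1) ∨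
      (ζ₁ (n + 1) ω + 1 = ζ₁ n ω ∧ ζ₂ (n + 1) ω = ζ₂ n ω) ∨
      (ζ₁ (n + 1) ω = ζ₁ n ω ∧ ζ₂ (n + 1) ω + 1 = ζ₂ n ω))
    (W : ℕ → Ω → ℝ)
    (hW : ∀ n ω, W n ω =
      (l₁ + α₁ * (ζ₁ n ω : ℝ)) + (l₂ + α₂ * (ζ₂ n ω : ℝ)) +
      (if 1 ≤ ζ₁ n ω then β₁ * (ζ₂ n ω : ℝ) else 0) +
      (if 1 ≤ ζ₂ n ω then β₂ * (ζ₁ n ω : ℝ) else 0))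
    (hright : ∀ n,
      P[({ω' | ζ₁ (n + 1) ω' = ζ₁ n ω' + 1 ∧ ζ₂ (n + 1) ω' = ζ₂ n ω'} : Set Ω).indicator
          (fun _ => (1 : ℝ)) | ℱ n]
        =ᵐ[P] fun ω => (l₁ + α₁ * (ζ₁ n ω : ℝ)) / W n ω)
    (hupp : ∀ n,
      P[({ω' | ζ₁ (n + 1) ω' = ζ₁ n ω' ∧ ζ₂ (n + 1) ω' = ζ₂ n ω' + 1} : Set Ω).indicator
          (fun _ => (1 : ℝ)) | ℱ n]
        =ᵐ[P] fun ω => (l₂ + α₂ * (ζ₂ n ω : ℝ)) / W n ω)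
    (hleft : ∀ n,
      P[({ω' | ζ₁ (n + 1) ω' + 1 = ζ₁ n ω' ∧ ζ₂ (n + 1) ω' = ζ₂ n ω'} : Set Ω).indicator
          (fun _ => (1 : ℝ)) | ℱ n]
        =ᵐ[P] fun ω => (if 1 ≤ ζ₁ n ω then β₁ * (ζ₂ n ω : ℝ) else 0) / W n ω)
    (hdownp : ∀ n,
      P[({ω' | ζ₁ (n + 1) ω' = ζ₁ n ω' ∧ ζ₂ (n + 1) ω' + 1 = ζ₂ n ω'} : Set Ω).indicator
          (fun _ => (1 : ℝ)) | ℱ n]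
        =ᵐ[P] fun ω => (if 1 ≤ ζ₂ n ω then β₂ * (ζ₁ n ω : ℝ) else 0) / W n ω)
    (ha12 : α₂ ≤ α₁) (hab : β₁ * β₂ < α₁ * α₂)
    (r : ℝ) (hr : r = (-(α₁ - α₂) + Real.sqrt ((α₁ - α₂) ^ 2 + 4 * β₁ * β₂)) / (2 * β₂))
    (T : ℕ → Ω → ℝ)
    (hT : ∀ n ω, T n ω = β₂ * (ζ₁ n ω : ℝ) + (r * β₂ + α₁ - α₂) * (ζ₂ n ω : ℝ)) :
    ∀ᵐ ω ∂P, (∀ n, ζ₁ n ω ≠ 0 ∧ ζ₂ n ω ≠ 0) →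
      0 < Filter.liminf (fun n : ℕ => T n ω / (n : ℝ)) atTop :=
  stmt_7_general P ℱ l₁ l₂ β₁ β₂ α₁ α₂ hl₁ hl₂ hβ₁ hβ₂ hα₁ hα₂ ζ₁ ζ₂ hζ₁meas hζ₂meas hstep W hW
    hright hupp hleft hdownp hab r hr T hT
end

section
/- For every n ≥ 0, almost surely on the event {ζ₁(n) ≥ 1 and ζ₂(n) ≥ 1}: E[S_{n+1} − S_n | 𝓕_n] = ρ̃ + (2λ₁β₂(α₂+β₁) + 2λ₂β₁(α₁+β₂))/R_n; in particular this conditional drift is at least ρ̃ on that event. -/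
/-!
Since `S` is linear, `S_{n+1} - S_n = A Δζ₁ + B Δζ₂` with `A, B` its coefficients, and on a
nearest-neighbour step `Δζ₁ = 1_right - 1_left`, `Δζ₂ = 1_up - 1_down`. Conditioning turns the
indicators into the transition probabilities, whose common denominator is `R_n` in the interior.
The coefficients of `S` are chosen so that `A (α₁x - β₁y) + B (α₂y - β₂x) = ρ̃ ((α₁+β₂)x + (α₂+β₁)y)`;
hence the numerator is `ρ̃ R_n` up to the constant `2λ₁β₂(α₂+β₁) + 2λ₂β₁(α₁+β₂) ≥ 0`.
-/

open MeasureTheory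

def IsNearestNeighbourStep (x y x' y' : ℕ) : Prop :=
  (x' = x + 1 ∧ y' = y) ∨ (x' = x ∧ y' = y + 1) ∨ (x' + 1 = x ∧ y' = y) ∨ (x' = x ∧ y' + 1 = y)

lemma IsNearestNeighbourStep.cast_sub_cast {x y x' y' : ℕ}
    (h : IsNearestNeighbourStep x y x' y') :
    (x' : ℝ) - x =
        (if x' = x + 1 ∧ y' = y then 1 else 0) - (if x' + 1 = x ∧ y' = y then 1 else 0) ∧
      (y' : ℝ) - y =
        (if x' = x ∧ y' = y + 1 then 1 else 0) - (if x' = x ∧ y' + 1 = y then 1 else 0) := by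
  rcases h with ⟨rfl, rfl⟩ | ⟨rfl, rfl⟩ | ⟨rfl, rfl⟩ | ⟨rfl, rfl⟩ <;> simp [add_assoc]

lemma measurableSet_eq_and_eq {Ω : Type*} [MeasurableSpace Ω] {a b c d : Ω → ℕ}
    (ha : Measurable a) (hb : Measurable b) (hc : Measurable c) (hd : Measurable d) :
    MeasurableSet {ω | a ω = b ω ∧ c ω = d ω} :=
  (measurableSet_eq_fun ha hb).inter (measurableSet_eq_fun hc hd)

section

variable {Ω : Type*} {m m0 : MeasurableSpace Ω} {μ : Measure Ω}

lemma condExp_smul_sub_add_smul_sub {f₁ g₁ f₂ g₂ : Ω → ℝ} (a b : ℝ)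
    (hf₁ : Integrable f₁ μ) (hg₁ : Integrable g₁ μ)
    (hf₂ : Integrable f₂ μ) (hg₂ : Integrable g₂ μ) :
    μ[a • (f₁ - g₁) + b • (f₂ - g₂) | m] =ᵐ[μ]
      a • (μ[f₁ | m] - μ[g₁ | m]) + b • (μ[f₂ | m] - μ[g₂ | m]) :=
  (condExp_add ((hf₁.sub hg₁).smul a) ((hf₂.sub hg₂).smul b) m).trans <|
    ((condExp_smul a _ m).trans ((condExp_sub hf₁ hg₁ m).const_smul a)).add
      ((condExp_smul b _ m).trans ((condExp_sub hf₂ hg₂ m).const_smul b))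

lemma condExp_linear_increment [IsFiniteMeasure μ] {X Y X' Y' : Ω → ℕ}
    (hX : Measurable X) (hY : Measurable Y) (hX' : Measurable X') (hY' : Measurable Y')
    (hstep : ∀ᵐ ω ∂μ, IsNearestNeighbourStep (X ω) (Y ω) (X' ω) (Y' ω)) (a b : ℝ) :
    μ[fun ω => (a * X' ω + b * Y' ω) - (a * X ω + b * Y ω) | m] =ᵐ[μ]
      a • (μ[{ω | X' ω = X ω + 1 ∧ Y' ω = Y ω}.indicator (fun _ => 1) | m] -
          μ[{ω | X' ω + 1 = X ω ∧ Y' ω = Y ω}.indicator (fun _ => 1) | m]) +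
        b • (μ[{ω | X' ω = X ω ∧ Y' ω = Y ω + 1}.indicator (fun _ => 1) | m] -
          μ[{ω | X' ω = X ω ∧ Y' ω + 1 = Y ω}.indicator (fun _ => 1) | m]) := by
  have hint {s : Set Ω} (hs : MeasurableSet s) : Integrable (s.indicator fun _ => (1 : ℝ)) μ :=
    (integrable_const 1).indicator hs
  refine (condExp_congr_ae ?_).trans (condExp_smul_sub_add_smul_sub a b
    (hint (measurableSet_eq_and_eq hX' (hX.add_const 1) hY' hY))
    (hint (measurableSet_eq_and_eq (hX'.add_const 1) hX hY' hY))
    (hint (measurableSet_eq_and_eq hX' hX hY' (hY.add_const 1)))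
    (hint (measurableSet_eq_and_eq hX' hX (hY'.add_const 1) hY)))
  filter_upwards [hstep] with ω hω
  obtain ⟨hΔX, hΔY⟩ := hω.cast_sub_cast
  simp only [Pi.add_apply, Pi.smul_apply, Pi.sub_apply, smul_eq_mul, Set.indicator_apply,
    Set.mem_ofPred_eq]
  linear_combination a * hΔX + b * hΔY

end

lemma interior_drift_eq {l₁ l₂ β₁ β₂ α₁ α₂ x y R : ℝ}
    (hR : R = (α₁ + β₂) * x + (α₂ + β₁) * y + l₁ + l₂) (hR0 : R ≠ 0) :
    (α₁ * α₂ + β₁ * β₂ + 2 * α₂ * β₂) * ((l₁ + α₁ * x) / R - β₁ * y / R) +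
        (α₁ * α₂ + β₁ * β₂ + 2 * α₁ * β₁) * ((l₂ + α₂ * y) / R - β₂ * x / R) =
      (α₁ * α₂ - β₁ * β₂) + (2 * l₁ * β₂ * (α₂ + β₁) + 2 * l₂ * β₁ * (α₁ + β₂)) / R := by
  field_simp
  rw [hR]
  ring

theorem stmt_9_general
    {Ω : Type*} {m0 : MeasurableSpace Ω} (P : Measure Ω) [IsProbabilityMeasure P]
    (ℱ : Filtration ℕ m0)
    (l₁ l₂ β₁ β₂ α₁ α₂ : ℝ)
    (hl₁ : 0 < l₁) (hl₂ : 0 < l₂) (hβ₁ : 0 < β₁) (hβ₂ : 0 < β₂)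
    (hα₁ : 0 ≤ α₁) (hα₂ : 0 ≤ α₂)
    (ζ₁ ζ₂ : ℕ → Ω → ℕ)
    (hζ₁meas : ∀ n, Measurable[ℱ n] (ζ₁ n)) (hζ₂meas : ∀ n, Measurable[ℱ n] (ζ₂ n))
    (hstep : ∀ n, ∀ᵐ ω ∂P,
      (ζ₁ (n + 1) ω = ζ₁ n ω + 1 ∧ ζ₂ (n + 1) ω = ζ₂ n ω) ∨
      (ζ₁ (n + 1) ω = ζ₁ n ω ∧ ζ₂ (n + 1) ω = ζ₂ n ω + 1) ∨
      (ζ₁ (n + 1) ω + 1 = ζ₁ n ω ∧ ζ₂ (n + 1) ω = ζ₂ n ω) ∨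
      (ζ₁ (n + 1) ω = ζ₁ n ω ∧ ζ₂ (n + 1) ω + 1 = ζ₂ n ω))
    (W : ℕ → Ω → ℝ)
    (hW : ∀ n ω, W n ω =
      (l₁ + α₁ * (ζ₁ n ω : ℝ)) + (l₂ + α₂ * (ζ₂ n ω : ℝ)) +
      (if 1 ≤ ζ₁ n ω then β₁ * (ζ₂ n ω : ℝ) else 0) +
      (if 1 ≤ ζ₂ n ω then β₂ * (ζ₁ n ω : ℝ) else 0))
    (hright : ∀ n,
      P[({ω' | ζ₁ (n + 1) ω' = ζ₁ n ω' + 1 ∧ ζ₂ (n + 1) ω' = ζ₂ n ω'} : Set Ω).indicator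
          (fun _ => (1 : ℝ)) | ℱ n]
        =ᵐ[P] fun ω => (l₁ + α₁ * (ζ₁ n ω : ℝ)) / W n ω)
    (hupp : ∀ n,
      P[({ω' | ζ₁ (n + 1) ω' = ζ₁ n ω' ∧ ζ₂ (n + 1) ω' = ζ₂ n ω' + 1} : Set Ω).indicator
          (fun _ => (1 : ℝ)) | ℱ n]
        =ᵐ[P] fun ω => (l₂ + α₂ * (ζ₂ n ω : ℝ)) / W n ω)
    (hleft : ∀ n,
      P[({ω' | ζ₁ (n + 1) ω' + 1 = ζ₁ n ω' ∧ ζ₂ (n + 1) ω' = ζ₂ n ω'} : Set Ω).indicator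
          (fun _ => (1 : ℝ)) | ℱ n]
        =ᵐ[P] fun ω => (if 1 ≤ ζ₁ n ω then β₁ * (ζ₂ n ω : ℝ) else 0) / W n ω)
    (hdownp : ∀ n,
      P[({ω' | ζ₁ (n + 1) ω' = ζ₁ n ω' ∧ ζ₂ (n + 1) ω' + 1 = ζ₂ n ω'} : Set Ω).indicator
          (fun _ => (1 : ℝ)) | ℱ n]
        =ᵐ[P] fun ω => (if 1 ≤ ζ₂ n ω then β₂ * (ζ₁ n ω : ℝ) else 0) / W n ω)
    (R : ℕ → Ω → ℝ)
    (hR : ∀ n ω, R n ω = (α₁ + β₂) * (ζ₁ n ω : ℝ) + (α₂ + β₁) * (ζ₂ n ω : ℝ) + l₁ + l₂)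
    (S : ℕ → Ω → ℝ)
    (hS : ∀ n ω, S n ω = (α₁ * α₂ + β₁ * β₂ + 2 * α₂ * β₂) * (ζ₁ n ω : ℝ) +
      (α₁ * α₂ + β₁ * β₂ + 2 * α₁ * β₁) * (ζ₂ n ω : ℝ)) :
    ∀ n, ∀ᵐ ω ∂P, 1 ≤ ζ₁ n ω → 1 ≤ ζ₂ n ω →
      (P[(fun ω' => S (n + 1) ω' - S n ω') | ℱ n]) ω =
        (α₁ * α₂ - β₁ * β₂) +
          (2 * l₁ * β₂ * (α₂ + β₁) + 2 * l₂ * β₁ * (α₁ + β₂)) / R n ω ∧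
      (α₁ * α₂ - β₁ * β₂) ≤ (P[(fun ω' => S (n + 1) ω' - S n ω') | ℱ n]) ω := by
  intro n
  have hζ₁ (k : ℕ) : Measurable (ζ₁ k) := (hζ₁meas k).mono (ℱ.le k) le_rfl
  have hζ₂ (k : ℕ) : Measurable (ζ₂ k) := (hζ₂meas k).mono (ℱ.le k) le_rfl
  have hdrift := condExp_linear_increment (m := ℱ n) (hζ₁ n) (hζ₂ n) (hζ₁ (n + 1))
    (hζ₂ (n + 1)) (hstep n) (α₁ * α₂ + β₁ * β₂ + 2 * α₂ * β₂) (α₁ * α₂ + β₁ * β₂ + 2 * α₁ * β₁)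
  simp only [hS]
  filter_upwards [hdrift, hright n, hupp n, hleft n, hdownp n] with ω hω hpR hpU hpL hpD hx hy
  have hWR : W n ω = R n ω := by
    rw [hW, hR, if_pos hx, if_pos hy]
    ring
  have hRpos : 0 < R n ω := by
    rw [hR]
    positivity
  rw [if_pos hx] at hpL
  rw [if_pos hy] at hpD
  simp only [Pi.add_apply, Pi.smul_apply, Pi.sub_apply, smul_eq_mul] at hω
  rw [hω, hpR, hpU, hpL, hpD, hWR, interior_drift_eq (hR n ω) hRpos.ne']
  exact ⟨rfl, le_add_of_nonneg_right (div_nonneg (by positivity) hRpos.le)⟩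

/-- Drift of `Sₙ` in the interior. For the discrete-time competition
process with linear interaction, for every `n`, almost surely on the event
`{ζ₁(n) ≥ 1 and ζ₂(n) ≥ 1}`,
`E[S_{n+1} − Sₙ | ℱ n] = ρ̃ + (2λ₁β₂(α₂+β₁) + 2λ₂β₁(α₁+β₂))/Rₙ ≥ ρ̃`. -/
theorem stmt_9
    {Ω : Type*} {m0 : MeasurableSpace Ω} (P : Measure Ω) [IsProbabilityMeasure P]
    (ℱ : Filtration ℕ m0)
    (l₁ l₂ β₁ β₂ α₁ α₂ : ℝ)
    (hl₁ : 0 < l₁) (hl₂ : 0 < l₂) (hβ₁ : 0 < β₁) (hβ₂ : 0 < β₂)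
    (hα₁ : 0 ≤ α₁) (hα₂ : 0 ≤ α₂)
    (ζ₁ ζ₂ : ℕ → Ω → ℕ)
    (hζ₁meas : ∀ n, Measurable[ℱ n] (ζ₁ n)) (hζ₂meas : ∀ n, Measurable[ℱ n] (ζ₂ n))
    (x₀ y₀ : ℕ) (hinit : ∀ ω, ζ₁ 0 ω = x₀ ∧ ζ₂ 0 ω = y₀)
    (hstep : ∀ n, ∀ᵐ ω ∂P,
      (ζ₁ (n + 1) ω = ζ₁ n ω + 1 ∧ ζ₂ (n + 1) ω = ζ₂ n ω) ∨
      (ζ₁ (n + 1) ω = ζ₁ n ω ∧ ζ₂ (n + 1) ω = ζ₂ n ω + 1) ∨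
      (ζ₁ (n + 1) ω + 1 = ζ₁ n ω ∧ ζ₂ (n + 1) ω = ζ₂ n ω) ∨
      (ζ₁ (n + 1) ω = ζ₁ n ω ∧ ζ₂ (n + 1) ω + 1 = ζ₂ n ω))
    (W : ℕ → Ω → ℝ)
    (hW : ∀ n ω, W n ω =
      (l₁ + α₁ * (ζ₁ n ω : ℝ)) + (l₂ + α₂ * (ζ₂ n ω : ℝ)) +
      (if 1 ≤ ζ₁ n ω then β₁ * (ζ₂ n ω : ℝ) else 0) +
      (if 1 ≤ ζ₂ n ω then β₂ * (ζ₁ n ω : ℝ) else 0))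
    (hright : ∀ n,
      P[({ω' | ζ₁ (n + 1) ω' = ζ₁ n ω' + 1 ∧ ζ₂ (n + 1) ω' = ζ₂ n ω'} : Set Ω).indicator
          (fun _ => (1 : ℝ)) | ℱ n]
        =ᵐ[P] fun ω => (l₁ + α₁ * (ζ₁ n ω : ℝ)) / W n ω)
    (hupp : ∀ n,
      P[({ω' | ζ₁ (n + 1) ω' = ζ₁ n ω' ∧ ζ₂ (n + 1) ω' = ζ₂ n ω' + 1} : Set Ω).indicator
          (fun _ => (1 : ℝ)) | ℱ n]
        =ᵐ[P] fun ω => (l₂ + α₂ * (ζ₂ n ω : ℝ)) / W n ω)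
    (hleft : ∀ n,
      P[({ω' | ζ₁ (n + 1) ω' + 1 = ζ₁ n ω' ∧ ζ₂ (n + 1) ω' = ζ₂ n ω'} : Set Ω).indicator
          (fun _ => (1 : ℝ)) | ℱ n]
        =ᵐ[P] fun ω => (if 1 ≤ ζ₁ n ω then β₁ * (ζ₂ n ω : ℝ) else 0) / W n ω)
    (hdownp : ∀ n,
      P[({ω' | ζ₁ (n + 1) ω' = ζ₁ n ω' ∧ ζ₂ (n + 1) ω' + 1 = ζ₂ n ω'} : Set Ω).indicator
          (fun _ => (1 : ℝ)) | ℱ n]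
        =ᵐ[P] fun ω => (if 1 ≤ ζ₂ n ω then β₂ * (ζ₁ n ω : ℝ) else 0) / W n ω)
    (R : ℕ → Ω → ℝ)
    (hR : ∀ n ω, R n ω = (α₁ + β₂) * (ζ₁ n ω : ℝ) + (α₂ + β₁) * (ζ₂ n ω : ℝ) + l₁ + l₂)
    (S : ℕ → Ω → ℝ)
    (hS : ∀ n ω, S n ω = (α₁ * α₂ + β₁ * β₂ + 2 * α₂ * β₂) * (ζ₁ n ω : ℝ) +
      (α₁ * α₂ + β₁ * β₂ + 2 * α₁ * β₁) * (ζ₂ n ω : ℝ)) :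
    ∀ n, ∀ᵐ ω ∂P, 1 ≤ ζ₁ n ω → 1 ≤ ζ₂ n ω →
      (P[(fun ω' => S (n + 1) ω' - S n ω') | ℱ n]) ω =
        (α₁ * α₂ - β₁ * β₂) +
          (2 * l₁ * β₂ * (α₂ + β₁) + 2 * l₂ * β₁ * (α₁ + β₂)) / R n ω ∧
      (α₁ * α₂ - β₁ * β₂) ≤ (P[(fun ω' => S (n + 1) ω' - S n ω') | ℱ n]) ω :=
  stmt_9_general P ℱ l₁ l₂ β₁ β₂ α₁ α₂ hl₁ hl₂ hβ₁ hβ₂ hα₁ hα₂ ζ₁ ζ₂ hζ₁meas hζ₂meas hstep W hW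
    hright hupp hleft hdownp R hR S hS
end
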